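/- arXiv:1604.00402 — 4 statements merged into one kernel-verified Lean document; each statement's English description precedes it below -/
import Mathlib

section
/- Let n ≥ 2, let 𝓡 be a family of standard dyadic rectangles in ℝ^n, and let 1 ≤ d ≤ n−1 be an integer. Suppose there exist constants c > 0 and c' ≥ 1 such that for every sufficiently large k ∈ ℕ there exist measurable sets Θ_k ⊆ Y_k ⊆ ℝ^n with 0 < |Θ_k| < ∞, |Y_k| ≥ c·2^{dk} k^d |Θ_k|, and M_𝓡 χ_{Θ_k}(x) ≥ c'·2^{−dk} for every x ∈ Y_k. Then for every Orlicz function Φ satisfying Φ = o(Φ_d) at ∞, the maximal operator M_𝓡 does not satisfy a weak L^Φ inequality; in particular, M_𝓡 does not satisfy a weak (1,1) inequality. -/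
open MeasureTheory Set Filter
open scoped ENNReal

noncomputable section

/-- The standard rectangle `[0, α 0] × ⋯ × [0, α (n-1)]` in `ℝ^n`. -/
def stdRect (n : ℕ) (α : Fin n → ℝ) : Set (Fin n → ℝ) :=
  Set.univ.pi fun i => Set.Icc 0 (α i)

/-- A standard rectangle in `ℝ^n`: `[0,α₁]×⋯×[0,αₙ]` with `0 < αᵢ ≤ 1`. -/
def IsStandardRect {n : ℕ} (R : Set (Fin n → ℝ)) : Prop :=
  ∃ α : Fin n → ℝ, (∀ i, 0 < α i ∧ α i ≤ 1) ∧ R = stdRect n α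

/-- A standard dyadic rectangle in `ℝ^n`: each side is `2^{-mᵢ}` with `mᵢ ∈ ℕ`. -/
def IsStandardDyadicRect {n : ℕ} (R : Set (Fin n → ℝ)) : Prop :=
  ∃ m : Fin n → ℕ, R = stdRect n fun i => (2 : ℝ) ^ (-(m i : ℤ))

/-- The maximal operator associated to a family `𝓡` of rectangles, allowing all translates:
`M_𝓡 f (x) = sup { |R|⁻¹ ∫_{τ(R)} |f| : R ∈ 𝓡, τ translation, x ∈ τ(R) }`. -/
def maximalFn {n : ℕ} (𝓡 : Set (Set (Fin n → ℝ))) (f : (Fin n → ℝ) → ℝ)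
    (x : Fin n → ℝ) : ℝ≥0∞ :=
  ⨆ (R : Set (Fin n → ℝ)) (_ : R ∈ 𝓡) (v : Fin n → ℝ)
      (_ : x ∈ (fun y => v + y) '' R),
    (∫⁻ y in (fun y => v + y) '' R, ENNReal.ofReal |f y|) / volume R

/-- A family of sets has finite width if it is a finite union of subfamilies
each totally ordered by inclusion. -/
def FiniteWidth {β : Type*} (𝓕 : Set (Set β)) : Prop :=
  ∃ (N : ℕ) (c : Fin N → Set (Set β)),
    𝓕 = (⋃ i, c i) ∧ ∀ i, IsChain (· ⊆ ·) (c i)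

/-- An Orlicz function: convex, increasing on `[0,∞)`, vanishing at `0`. -/
def IsOrlicz (Φ : ℝ → ℝ) : Prop :=
  ConvexOn ℝ (Set.Ici 0) Φ ∧ MonotoneOn Φ (Set.Ici 0) ∧ Φ 0 = 0

/-- `Φ_d(t) = t (1 + log₊^d t)`. -/
def phiD (d : ℕ) (t : ℝ) : ℝ := t * (1 + max (Real.log t) 0 ^ d)

/-- `M_𝓡` satisfies a weak `L^Φ` inequality. -/
def WeakOrlicz {n : ℕ} (𝓡 : Set (Set (Fin n → ℝ))) (Φ : ℝ → ℝ) : Prop :=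
  ∃ C : ℝ, 0 < C ∧ ∀ f : (Fin n → ℝ) → ℝ, Measurable f →
    Integrable (fun x => Φ |f x|) → ∀ l : ℝ, 0 < l →
      volume {x | ENNReal.ofReal l < maximalFn 𝓡 f x} ≤
        ∫⁻ x, ENNReal.ofReal (Φ (C * |f x| / l))

/-- `M_𝓡` satisfies a weak `(1,1)` inequality. -/
def Weak11 {n : ℕ} (𝓡 : Set (Set (Fin n → ℝ))) : Prop :=
  ∃ C : ℝ, 0 < C ∧ ∀ f : (Fin n → ℝ) → ℝ, Measurable f → Integrable f →
    ∀ l : ℝ, 0 < l →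
      volume {x | ENNReal.ofReal l < maximalFn 𝓡 f x} ≤
        ENNReal.ofReal (C * (∫ x, |f x|) / l)

/-- `M_𝓡` satisfies a weak `L log^d L` inequality. -/
def WeakLLog {n : ℕ} (𝓡 : Set (Set (Fin n → ℝ))) (d : ℕ) : Prop :=
  ∃ c : ℝ, 0 < c ∧ ∀ f : (Fin n → ℝ) → ℝ, Measurable f → ∀ l : ℝ, 0 < l →
    volume {x | ENNReal.ofReal l < maximalFn 𝓡 f x} ≤
      ENNReal.ofReal c * ∫⁻ x, ENNReal.ofReal (phiD d (|f x| / l))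

/-- Projection onto the plane of coordinates `0` and `j`. -/
def planeProj {n : ℕ} (hn : 2 ≤ n) (j : Fin n) (x : Fin n → ℝ) : Fin 2 → ℝ :=
  ![x ⟨0, by omega⟩, x j]

/-- The family `𝓡_k = { [0,s₁]×⋯×[0,s_{n-1}]×[0, a/(s₁⋯s_{n-1})] : sᵢ ∈ 𝔻_k }`. -/
def guzmanFamily (n : ℕ) (hn : 2 ≤ n) (a : ℝ) (k : ℕ) : Set (Set (Fin n → ℝ)) :=
  { R | ∃ s : Fin n → ℝ,
      (∀ i : Fin n, (i : ℕ) < n - 1 → ∃ j : ℕ, j ≤ k ∧ s i = (2 : ℝ) ^ (-(j : ℤ))) ∧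
      s ⟨n - 1, by omega⟩ =
        a / ∏ i ∈ Finset.univ.filter (fun i : Fin n => (i : ℕ) < n - 1), s i ∧
      R = stdRect n s }

/-- The family `𝓡̃_k` in `ℝ^n`: rectangles
`[0,s₁]×⋯×[0,s_{n-2}]×[0, 2^{-(n-1)k}/(s₁⋯s_{n-2})]×[0,1]` with `sᵢ ∈ 𝔻_k`. -/
def exFamily (n : ℕ) (hn : 3 ≤ n) (k : ℕ) : Set (Set (Fin n → ℝ)) :=
  { R | ∃ s : Fin n → ℝ,
      (∀ i : Fin n, (i : ℕ) < n - 2 → ∃ j : ℕ, j ≤ k ∧ s i = (2 : ℝ) ^ (-(j : ℤ))) ∧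
      s ⟨n - 2, by omega⟩ = (2 : ℝ) ^ (-((n - 1) * k : ℤ)) /
        ∏ i ∈ Finset.univ.filter (fun i : Fin n => (i : ℕ) < n - 2), s i ∧
      s ⟨n - 1, by omega⟩ = 1 ∧
      R = stdRect n s }

/-- The hypothesis of Theorem `thm.stokn`: for every `k` there are a dyadic number
`α = 2^{-p} ≤ 2^{-k-1}` and strictly increasing dyadic numbers `0 < A i 0 < ⋯ < A i k ≤ 1`
(`i < n-1`) such that for every nonincreasing `J` with values `≤ k`,
the rectangle `(∏_{i<n-1} [0, A i (J i)]) × [0, 2^{-p}]` belongs to `𝓡`. -/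
def StokolosHyp (n : ℕ) (𝓡 : Set (Set (Fin n → ℝ))) : Prop :=
  ∀ k : ℕ, ∃ (p : ℕ) (A : ℕ → ℕ → ℝ),
    k + 1 ≤ p ∧
    (∀ i < n - 1, ∀ j ≤ k, ∃ m : ℕ, A i j = (2 : ℝ) ^ (-(m : ℤ))) ∧
    (∀ i < n - 1, ∀ j < k, A i j < A i (j + 1)) ∧
    (∀ i < n - 1, A i k ≤ 1) ∧
    ∀ J : ℕ → ℕ, (∀ l, J l ≤ k) → (∀ a b : ℕ, a ≤ b → J b ≤ J a) →
      stdRect n (fun i : Fin n =>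
        if (i : ℕ) < n - 1 then A (i : ℕ) (J (i : ℕ)) else (2 : ℝ) ^ (-(p : ℤ))) ∈ 𝓡

/-- For a chain `R_0 ≺ ⋯ ≺ R_k` with `R_j = ∏_l [0, α l j]`, the rectangle
`R^i_j = p_{1,…,i-1}(R_k) × p_{i,…,n}(R_j)` (here `i` is 0-indexed). -/
def hatRect (n : ℕ) (α : Fin n → ℕ → ℝ) (k : ℕ) (i : Fin n) (j : ℕ) :
    Set (Fin n → ℝ) :=
  { x | ∀ l : Fin n, ((l : ℕ) < (i : ℕ) → x l ∈ Set.Icc 0 (α l k)) ∧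
        ((i : ℕ) ≤ (l : ℕ) → x l ∈ Set.Icc 0 (α l j)) }

/-- Rademacher-type functions: `r 1 = χ_{ℤ+[0,1/2)}` and `r i (x) = r (i-1) (2x mod 1)`,
i.e. `r i (x) = 1` iff `fract (2^{i-1} x) < 1/2`. -/
def rademacher (i : ℕ) (x : ℝ) : ℝ :=
  if Int.fract ((2 : ℝ) ^ (i - 1) * x) < 1 / 2 then 1 else 0

/-- The set `Y_J ⊆ R₀` (here `J : ℕ → ℕ` carries the conventions `J 0 = k`, `J n = 0`;
coordinate `i` of `ℝ^n` is 0-indexed, corresponding to the paper's `i+1`). -/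
def Yset (n k : ℕ) (m : ℕ → ℕ → ℕ) (J : ℕ → ℕ) : Set (Fin n → ℝ) :=
  stdRect n (fun i => (2 : ℝ) ^ (-(m (i : ℕ) k : ℤ))) ∩
    { x | (∏ i : Fin n, ∏ μ ∈ Finset.Icc (J ((i : ℕ) + 1)) (J (i : ℕ)),
        rademacher (m (i : ℕ) μ) (x i)) = 1 }

/-- The set `E_{j₁,…,j_{r-1}}`: union of the `Y_J` over the `J` extending the given prefix
`j` on positions `1,…,r-1`, nonincreasing, with `J 0 = k` and `J n = 0`. -/
def Eset (n k r : ℕ) (m : ℕ → ℕ → ℕ) (j : ℕ → ℕ) : Set (Fin n → ℝ) :=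
  ⋃ J ∈ { J : ℕ → ℕ | J 0 = k ∧ J n = 0 ∧ (∀ a b : ℕ, a ≤ b → J b ≤ J a) ∧
      ∀ l, 1 ≤ l → l < r → J l = j l },
    Yset n k m J

/-! The test sets turn a weak `L^Φ` bound into `c 2^{dk} k^d ≤ Φ(A 2^{dk})` for a constant `A`
and all large `k`: testing the bound on `χ_{Θ_k}` at the level `λ = c' 2^{-dk} / 2` gives
`c 2^{dk} k^d |Θ_k| ≤ |Y_k| ≤ |{M_𝓡 χ_{Θ_k} > λ}| ≤ Φ(C / λ) |Θ_k|`. Since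
`Φ_d(A 2^{dk}) = O(2^{dk} k^d)`, this is incompatible with `Φ = o(Φ_d)`, and, for `Φ(t) = t`,
with `k^d → ∞`. -/

open Real

section RestrictedWeakType

variable {n : ℕ} {𝓡 : Set (Set (Fin n → ℝ))} {Φ : ℝ → ℝ}

def RestrictedWeakOrlicz (𝓡 : Set (Set (Fin n → ℝ))) (Φ : ℝ → ℝ) : Prop :=
  ∃ C : ℝ, 0 < C ∧ ∀ Θ : Set (Fin n → ℝ), MeasurableSet Θ → volume Θ < ⊤ → ∀ l : ℝ, 0 < l →
    volume {x | ENNReal.ofReal l < maximalFn 𝓡 (Θ.indicator fun _ => 1) x} ≤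
      ENNReal.ofReal (Φ (C / l)) * volume Θ

theorem comp_abs_indicator_one {α β : Type*} [Zero β] (s : Set α) {g : ℝ → β} (hg : g 0 = 0) :
    (fun x => g |s.indicator (fun _ => (1 : ℝ)) x|) = s.indicator fun _ => g 1 := by
  funext x
  by_cases hx : x ∈ s <;> simp [hx, hg]

theorem WeakOrlicz.restrictedWeakOrlicz (hΦ0 : Φ 0 = 0) (h : WeakOrlicz 𝓡 Φ) :
    RestrictedWeakOrlicz 𝓡 Φ := by
  obtain ⟨C, hC, hweak⟩ := h
  refine ⟨C, hC, fun Θ hΘ hΘfin l hl => ?_⟩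
  have hint : Integrable fun x => Φ |Θ.indicator (fun _ => (1 : ℝ)) x| := by
    rw [comp_abs_indicator_one Θ hΦ0]
    exact (integrable_indicator_iff hΘ).2 (integrableOn_const hΘfin.ne)
  have hlint := comp_abs_indicator_one Θ (g := fun t => ENNReal.ofReal (Φ (C * t / l)))
    (by simp [hΦ0])
  calc _ ≤ _ := hweak _ (measurable_const.indicator hΘ) hint l hl
    _ = ENNReal.ofReal (Φ (C / l)) * volume Θ := by
      simp only [hlint, lintegral_indicator_const hΘ, mul_one]

theorem Weak11.restrictedWeakOrlicz_id (h : Weak11 𝓡) : RestrictedWeakOrlicz 𝓡 id := by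
  obtain ⟨C, hC, hweak⟩ := h
  refine ⟨C, hC, fun Θ hΘ hΘfin l hl => ?_⟩
  have hint : ∫ x, |Θ.indicator (fun _ => (1 : ℝ)) x| = volume.real Θ := by
    have habs := comp_abs_indicator_one Θ (g := id) rfl
    simp only [id] at habs
    rw [habs]
    exact integral_indicator_one hΘ
  calc _ ≤ _ := hweak _ (measurable_const.indicator hΘ)
        ((integrable_indicator_iff hΘ).2 (integrableOn_const hΘfin.ne)) l hl
    _ = ENNReal.ofReal (id (C / l)) * volume Θ := by
      rw [hint, mul_div_right_comm, ENNReal.ofReal_mul (by positivity),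
        ofReal_measureReal hΘfin.ne, id]

theorem not_restrictedWeakOrlicz_of_testSets {d : ℕ} {c c' : ℝ} (hc : 0 < c) (hc' : 0 < c')
    (H : ∀ᶠ k : ℕ in atTop, ∃ Θ Y : Set (Fin n → ℝ),
      MeasurableSet Θ ∧ 0 < volume Θ ∧ volume Θ < ⊤ ∧
      ENNReal.ofReal (c * (2 : ℝ) ^ (d * k) * (k : ℝ) ^ d) * volume Θ ≤ volume Y ∧
      ∀ x ∈ Y, ENNReal.ofReal (c' * ((2 : ℝ) ^ (d * k))⁻¹) ≤
        maximalFn 𝓡 (Θ.indicator fun _ => (1 : ℝ)) x)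
    (hΦ : ∀ A : ℝ, 0 < A → ∀ᶠ k : ℕ in atTop, Φ (A * 2 ^ (d * k)) < c * 2 ^ (d * k) * k ^ d) :
    ¬ RestrictedWeakOrlicz 𝓡 Φ := by
  rintro ⟨C, hC, hweak⟩
  obtain ⟨k, ⟨Θ, Y, hΘ, hΘ0, hΘfin, hY, hM⟩, hΦk, hk⟩ :=
    (H.and ((hΦ (2 * C / c') (by positivity)).and (eventually_ge_atTop 1))).exists
  set a : ℝ := c * 2 ^ (d * k) * k ^ d
  set l : ℝ := c' * ((2 : ℝ) ^ (d * k))⁻¹ / 2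
  have hl : 0 < l := by positivity
  have hCl : C / l = 2 * C / c' * 2 ^ (d * k) := by
    simp only [l]
    field_simp
  have hY_sub : Y ⊆ {x | ENNReal.ofReal l < maximalFn 𝓡 (Θ.indicator fun _ => 1) x} :=
    fun x hx => (ENNReal.ofReal_lt_ofReal_iff (by positivity)).2 (half_lt_self (by positivity))
      |>.trans_le (hM x hx)
  have hle : ENNReal.ofReal a * volume Θ ≤ ENNReal.ofReal (Φ (C / l)) * volume Θ :=
    hY.trans ((measure_mono hY_sub).trans (hweak Θ hΘ hΘfin l hl))
  rw [ENNReal.mul_le_mul_iff_left hΘ0.ne' hΘfin.ne, hCl] at hle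
  have ha : 0 < a := by
    have : (1 : ℝ) ≤ k := by exact_mod_cast hk
    positivity
  exact hle.not_gt ((ENNReal.ofReal_lt_ofReal_iff ha).2 hΦk)

end RestrictedWeakType

theorem phiD_pos {t : ℝ} (ht : 0 < t) (d : ℕ) : 0 < phiD d t :=
  mul_pos ht (by positivity)

theorem phiD_mul_pow_le {A r : ℝ} (hA : 0 < A) (hr : 1 ≤ r) {k : ℕ} (hk : 1 ≤ k) (d : ℕ) :
    phiD d (A * r ^ k) ≤ A * (1 + (|log A| + log r) ^ d) * r ^ k * k ^ d := by
  set L := |log A| + log r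
  have hk' : (1 : ℝ) ≤ k := by exact_mod_cast hk
  have hlogr : 0 ≤ log r := log_nonneg hr
  have hL : 0 ≤ L := by positivity
  have hlog : max (log (A * r ^ k)) 0 ≤ L * k := by
    rw [log_mul hA.ne' (by positivity), log_pow]
    refine max_le ?_ (by positivity)
    nlinarith [le_abs_self (log A), abs_nonneg (log A)]
  have hpow : 1 + max (log (A * r ^ k)) 0 ^ d ≤ (1 + L ^ d) * k ^ d := by
    have := pow_le_pow_left₀ (le_max_right _ _) hlog d
    nlinarith [one_le_pow₀ (n := d) hk', mul_pow L (k : ℝ) d, pow_nonneg hL d]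
  calc phiD d (A * r ^ k) ≤ A * r ^ k * ((1 + L ^ d) * k ^ d) :=
        mul_le_mul_of_nonneg_left hpow (by positivity)
    _ = _ := by ring

theorem eventually_lt_of_tendsto_div_phiD {Φ : ℝ → ℝ} {d : ℕ} (hd : 1 ≤ d)
    (hΦ : Tendsto (fun t => Φ t / phiD d t) atTop (nhds 0)) {A c : ℝ} (hA : 0 < A)
    (hc : 0 < c) : ∀ᶠ k : ℕ in atTop, Φ (A * 2 ^ (d * k)) < c * 2 ^ (d * k) * k ^ d := by
  set K := A * (1 + (|log A| + log (2 ^ d)) ^ d)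
  have hK : 0 < K := by
    have : (0 : ℝ) ≤ log (2 ^ d) := log_nonneg (one_le_pow₀ one_le_two)
    positivity
  have hT : Tendsto (fun k : ℕ => A * (2 : ℝ) ^ (d * k)) atTop atTop := by
    simp only [pow_mul]
    exact (tendsto_pow_atTop_atTop_of_one_lt (one_lt_pow₀ one_lt_two (by omega))).const_mul_atTop
      hA
  filter_upwards [(hΦ.comp hT).eventually_lt_const (div_pos hc hK), eventually_ge_atTop 1]
    with k hk hk1
  have hTpos : 0 < A * (2 : ℝ) ^ (d * k) := by positivity
  rw [Function.comp_apply, div_lt_div_iff₀ (phiD_pos hTpos d) hK] at hk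
  have hbound := phiD_mul_pow_le hA (one_le_pow₀ (one_le_two (α := ℝ)) (n := d)) hk1 d
  rw [← pow_mul] at hbound
  nlinarith

theorem no_weak_orlicz_of_testSets_general (n : ℕ)
    (𝓡 : Set (Set (Fin n → ℝ)))
    (d : ℕ) (hd1 : 1 ≤ d)
    (c c' : ℝ) (hc : 0 < c) (hc' : 1 ≤ c')
    (H : ∃ k₀ : ℕ, ∀ k : ℕ, k₀ ≤ k → ∃ Θ Y : Set (Fin n → ℝ),
      MeasurableSet Θ ∧ MeasurableSet Y ∧ Θ ⊆ Y ∧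
      0 < volume Θ ∧ volume Θ < ⊤ ∧
      ENNReal.ofReal (c * (2 : ℝ) ^ (d * k) * (k : ℝ) ^ d) * volume Θ ≤ volume Y ∧
      ∀ x ∈ Y, ENNReal.ofReal (c' * ((2 : ℝ) ^ (d * k))⁻¹) ≤
        maximalFn 𝓡 (Θ.indicator fun _ => (1 : ℝ)) x) :
    (∀ Φ : ℝ → ℝ, IsOrlicz Φ →
      Tendsto (fun t => Φ t / phiD d t) atTop (nhds 0) → ¬ WeakOrlicz 𝓡 Φ) ∧
    ¬ Weak11 𝓡 := by
  have hc'0 : 0 < c' := by linarith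
  have key : ∀ Φ : ℝ → ℝ, (∀ A : ℝ, 0 < A →
      ∀ᶠ k : ℕ in atTop, Φ (A * 2 ^ (d * k)) < c * 2 ^ (d * k) * k ^ d) →
      ¬ RestrictedWeakOrlicz 𝓡 Φ := fun Φ =>
    not_restrictedWeakOrlicz_of_testSets hc hc'0 <| (eventually_atTop.2 H).mono
      fun _ ⟨Θ, Y, hΘ, _, _, hΘ0, hΘfin, hY, hM⟩ => ⟨Θ, Y, hΘ, hΘ0, hΘfin, hY, hM⟩
  refine ⟨fun Φ hΦ hΦd hweak => ?_, fun hweak => ?_⟩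
  · exact key Φ (fun A hA => eventually_lt_of_tendsto_div_phiD hd1 hΦd hA hc)
      (hweak.restrictedWeakOrlicz hΦ.2.2)
  · refine key id (fun A hA => ?_) hweak.restrictedWeakOrlicz_id
    have hkd : Tendsto (fun k : ℕ => (k : ℝ) ^ d) atTop atTop :=
      (tendsto_pow_atTop (by omega)).comp tendsto_natCast_atTop_atTop
    filter_upwards [hkd.eventually_gt_atTop (A / c)] with k hk
    rw [div_lt_iff₀ hc] at hk
    have : (0 : ℝ) < 2 ^ (d * k) := by positivity
    simp only [id]
    nlinarith

/-- If, for some `1 ≤ d ≤ n-1`, a family `𝓡` of standard dyadic rectangles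
admits, for all large `k`, sets `Θ_k ⊆ Y_k` with `|Y_k| ≥ c 2^{dk} k^d |Θ_k|` and
`M_𝓡 χ_{Θ_k} ≥ c' 2^{-dk}` on `Y_k`, then `M_𝓡` satisfies no weak `L^Φ` inequality for any
Orlicz function `Φ = o(Φ_d)` at `∞`; in particular `M_𝓡` has no weak `(1,1)` inequality. -/
theorem no_weak_orlicz_of_testSets (n : ℕ) (hn : 2 ≤ n)
    (𝓡 : Set (Set (Fin n → ℝ))) (h𝓡 : ∀ R ∈ 𝓡, IsStandardDyadicRect R)
    (d : ℕ) (hd1 : 1 ≤ d) (hdn : d ≤ n - 1)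
    (c c' : ℝ) (hc : 0 < c) (hc' : 1 ≤ c')
    (H : ∃ k₀ : ℕ, ∀ k : ℕ, k₀ ≤ k → ∃ Θ Y : Set (Fin n → ℝ),
      MeasurableSet Θ ∧ MeasurableSet Y ∧ Θ ⊆ Y ∧
      0 < volume Θ ∧ volume Θ < ⊤ ∧
      ENNReal.ofReal (c * (2 : ℝ) ^ (d * k) * (k : ℝ) ^ d) * volume Θ ≤ volume Y ∧
      ∀ x ∈ Y, ENNReal.ofReal (c' * ((2 : ℝ) ^ (d * k))⁻¹) ≤
        maximalFn 𝓡 (Θ.indicator fun _ => (1 : ℝ)) x) :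
    (∀ Φ : ℝ → ℝ, IsOrlicz Φ →
      Tendsto (fun t => Φ t / phiD d t) atTop (nhds 0) → ¬ WeakOrlicz 𝓡 Φ) ∧
    ¬ Weak11 𝓡 :=
  no_weak_orlicz_of_testSets_general n 𝓡 d hd1 c c' hc hc' H
end
end

section
/- Fix n ≥ 2 and α > 0. For k ∈ ℕ, k ≥ 1, let 𝔻_k := {2^{−j} : 0 ≤ j ≤ k} and define the family of rectangles 𝓡_k := { [0,s₁] × ⋯ × [0,s_{n−1}] × [0, α/(s₁·…·s_{n−1})] : s₁, …, s_{n−1} ∈ 𝔻_k }. Then the Lebesgue measure of the union of 𝓡_k satisfies |⋃𝓡_k| ≥ (1/(3·2^{n−2}))·k^{n−1}·α. -/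
open MeasureTheory Set Filter
open scoped ENNReal

noncomputable section

/-! For every choice of exponents `j₁, …, j_{n-1} ∈ {0, …, k-1}` the rectangle of `𝓡_k` with
sides `2^{-jᵢ}` contains the box `∏ᵢ (2^{-jᵢ-1}, 2^{-jᵢ}] × (0, a ∏ᵢ 2^{jᵢ}]` of volume
`a / 2^{n-1}`. Two such boxes with different exponents lie in disjoint dyadic shells in some
coordinate, so the union has measure at least `k^{n-1} a / 2^{n-1} ≥ k^{n-1} a / (3 · 2^{n-2})`. -/

def halfBox {ι : Type*} [DecidableEq ι] (F : Finset ι) (s : ι → ℝ) : Set (ι → ℝ) :=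
  univ.pi fun i => if i ∈ F then Ioc (s i / 2) (s i) else Ioc 0 (s i)

section HalfBox

variable {ι : Type*} [DecidableEq ι] (F : Finset ι) (s : ι → ℝ)

lemma measurableSet_halfBox [Countable ι] : MeasurableSet (halfBox F s) :=
  MeasurableSet.univ_pi fun i => by split_ifs <;> exact measurableSet_Ioc

lemma halfBox_subset_pi_Icc : halfBox F s ⊆ univ.pi fun i => Icc 0 (s i) := by
  intro x hx i _
  have hxi : x i ∈ if i ∈ F then Ioc (s i / 2) (s i) else Ioc 0 (s i) := hx i (mem_univ i)
  split_ifs at hxi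
  · exact ⟨by linarith [hxi.1, hxi.2], hxi.2⟩
  · exact ⟨hxi.1.le, hxi.2⟩

lemma volume_halfBox [Fintype ι] (hs : ∀ i, 0 ≤ s i) :
    volume (halfBox F s) = ENNReal.ofReal ((∏ i, s i) / 2 ^ F.card) := by
  have hside : ∀ i, volume (if i ∈ F then Ioc (s i / 2) (s i) else Ioc 0 (s i)) =
      ENNReal.ofReal (s i * if i ∈ F then 1 / 2 else 1) := fun i => by
    split_ifs <;> rw [Real.volume_Ioc] <;> ring_nf
  rw [halfBox, volume_pi_pi, Finset.prod_congr rfl fun i _ => hside i,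
    ← ENNReal.ofReal_prod_of_nonneg fun i _ => by have := hs i; positivity,
    Finset.prod_mul_distrib, Finset.prod_ite_mem, Finset.univ_inter, Finset.prod_const,
    div_pow, one_pow, mul_one_div]

end HalfBox

lemma two_zpow_neg_le_half {j j' : ℕ} (h : j < j') :
    (2 : ℝ) ^ (-(j' : ℤ)) ≤ 2 ^ (-(j : ℤ)) / 2 := by
  rw [div_eq_mul_inv, ← zpow_sub_one₀ two_ne_zero]
  exact zpow_le_zpow_right₀ one_le_two (by omega)

lemma disjoint_Ioc_half_two_zpow_neg {j j' : ℕ} (h : j ≠ j') :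
    Disjoint (Ioc ((2 : ℝ) ^ (-(j : ℤ)) / 2) (2 ^ (-(j : ℤ))))
      (Ioc ((2 : ℝ) ^ (-(j' : ℤ)) / 2) (2 ^ (-(j' : ℤ)))) := by
  rcases h.lt_or_gt with h | h
  · exact (Ioc_disjoint_Ioc_of_le (two_zpow_neg_le_half h)).symm
  · exact Ioc_disjoint_Ioc_of_le (two_zpow_neg_le_half h)

def initCoords (n : ℕ) : Finset (Fin n) := Finset.univ.filter fun i : Fin n => (i : ℕ) < n - 1

lemma card_initCoords (n : ℕ) : (initCoords n).card = n - 1 := by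
  rw [initCoords, Fin.card_filter_val_lt]
  omega

section GuzmanSides

variable {n : ℕ} (a : ℝ) (j : Fin n → ℕ)

def guzmanSides : Fin n → ℝ := fun i =>
  if (i : ℕ) < n - 1 then 2 ^ (-(j i : ℤ))
  else a / ∏ l ∈ initCoords n, (2 : ℝ) ^ (-(j l : ℤ))

lemma stdRect_guzmanSides_mem_guzmanFamily (hn : 2 ≤ n) {k : ℕ} (hj : ∀ i, j i ≤ k) :
    stdRect n (guzmanSides a j) ∈ guzmanFamily n hn a k := by
  refine ⟨_, fun i hi => ⟨j i, hj i, if_pos hi⟩, ?_, rfl⟩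
  simp only [lt_irrefl, if_false]
  exact congrArg _ (Finset.prod_congr rfl fun i hi => (if_pos (Finset.mem_filter.1 hi).2).symm)

lemma prod_guzmanSides (hn : 1 ≤ n) : ∏ i, guzmanSides a j i = a := by
  have hlast :
      Finset.univ.filter (fun i : Fin n => ¬ (i : ℕ) < n - 1) = {⟨n - 1, by omega⟩} := by
    ext i
    simp only [Finset.mem_filter, Finset.mem_univ, true_and, Finset.mem_singleton, Fin.ext_iff]
    omega
  rw [← Finset.prod_filter_mul_prod_filter_not Finset.univ fun i : Fin n => (i : ℕ) < n - 1,
    hlast, Finset.prod_singleton]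
  simp only [guzmanSides, lt_irrefl, if_false]
  rw [Finset.prod_congr rfl fun i hi => if_pos (Finset.mem_filter.1 hi).2]
  exact mul_div_cancel₀ a (Finset.prod_ne_zero_iff.2 fun _ _ => by positivity)

lemma guzmanSides_nonneg (ha : 0 ≤ a) (i : Fin n) : 0 ≤ guzmanSides a j i := by
  unfold guzmanSides
  split_ifs <;> positivity

end GuzmanSides

def extendExponents {n k : ℕ} (w : Fin (n - 1) → Fin k) : Fin n → ℕ := fun i =>
  if h : (i : ℕ) < n - 1 then w ⟨i, h⟩ else 0

lemma extendExponents_le {n k : ℕ} (w : Fin (n - 1) → Fin k) (i : Fin n) :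
    extendExponents w i ≤ k := by
  unfold extendExponents
  split_ifs
  exacts [(w _).isLt.le, Nat.zero_le k]

lemma pairwise_disjoint_halfBox_guzmanSides {n k : ℕ} (a : ℝ) :
    Pairwise (Function.onFun Disjoint fun w : Fin (n - 1) → Fin k =>
      halfBox (initCoords n) (guzmanSides a (extendExponents w))) := by
  intro w w' hne
  obtain ⟨i, hi⟩ := Function.ne_iff.1 hne
  rw [Function.onFun, halfBox, halfBox, disjoint_univ_pi]
  refine ⟨Fin.castLE (by omega) i, ?_⟩
  have hmem : Fin.castLE (by omega) i ∈ initCoords n := by simp [initCoords]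
  simp only [hmem, guzmanSides, extendExponents, Fin.val_castLE, i.isLt, if_pos, dif_pos]
  exact disjoint_Ioc_half_two_zpow_neg (by simpa [Fin.val_inj] using hi)

theorem measure_sUnion_guzmanFamily_ge_general (n : ℕ) (hn : 2 ≤ n)
    (a : ℝ) (ha : 0 < a) (k : ℕ) :
    ENNReal.ofReal (1 / (3 * 2 ^ (n - 2)) * (k : ℝ) ^ (n - 1) * a) ≤
      volume (⋃₀ guzmanFamily n hn a k) := by
  set box := fun w : Fin (n - 1) → Fin k =>
    halfBox (initCoords n) (guzmanSides a (extendExponents w))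
  have hvol : ∀ w, volume (box w) = ENNReal.ofReal (a / 2 ^ (n - 1)) := fun w => by
    rw [volume_halfBox _ _ (guzmanSides_nonneg a _ ha.le), prod_guzmanSides a _ (by omega),
      card_initCoords]
  have hunion : volume (⋃ w, box w) = k ^ (n - 1) * ENNReal.ofReal (a / 2 ^ (n - 1)) := by
    rw [measure_iUnion (pairwise_disjoint_halfBox_guzmanSides a)
      (fun w => measurableSet_halfBox _ _), tsum_fintype,
      Finset.sum_congr rfl fun w _ => hvol w]
    simp
  have hsub : ⋃ w, box w ⊆ ⋃₀ guzmanFamily n hn a k := iUnion_subset fun w =>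
    (halfBox_subset_pi_Icc _ _).trans (subset_sUnion_of_mem
      (stdRect_guzmanSides_mem_guzmanFamily a _ hn (extendExponents_le w)))
  have hcoeff : (2 : ℝ) ^ (n - 1) ≤ 3 * 2 ^ (n - 2) := calc
    (2 : ℝ) ^ (n - 1) ≤ 2 ^ (n - 2 + 1) := pow_le_pow_right₀ one_le_two (by omega)
    _ ≤ 3 * 2 ^ (n - 2) := by rw [pow_succ']; gcongr; norm_num
  calc ENNReal.ofReal (1 / (3 * 2 ^ (n - 2)) * (k : ℝ) ^ (n - 1) * a)
      ≤ ENNReal.ofReal (k ^ (n - 1) * (a / 2 ^ (n - 1))) := by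
        apply ENNReal.ofReal_le_ofReal
        rw [mul_comm (1 / _), mul_assoc, one_div_mul_eq_div]
        gcongr
    _ = volume (⋃ w, box w) := by
        rw [hunion, ENNReal.ofReal_mul (by positivity), ENNReal.ofReal_pow (by positivity),
          ENNReal.ofReal_natCast]
    _ ≤ volume (⋃₀ guzmanFamily n hn a k) := measure_mono hsub

/-- Lemma 1 of the paper. For `n ≥ 2`, `α > 0` and `k ≥ 1`,
`|⋃ 𝓡_k| ≥ (1/(3·2^{n-2})) k^{n-1} α`. -/
theorem measure_sUnion_guzmanFamily_ge (n : ℕ) (hn : 2 ≤ n)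
    (a : ℝ) (ha : 0 < a) (k : ℕ) (hk : 1 ≤ k) :
    ENNReal.ofReal (1 / (3 * 2 ^ (n - 2)) * (k : ℝ) ^ (n - 1) * a) ≤
      volume (⋃₀ guzmanFamily n hn a k) :=
  measure_sUnion_guzmanFamily_ge_general n hn a ha k

end
end

section
/- Let 𝓡' be a family of standard dyadic rectangles in ℝ² with the following property: for every k ∈ ℕ there is a finite subfamily 𝓡'' ⊆ 𝓡' with #𝓡'' ≥ 2k+1 such that any two distinct R, R' ∈ 𝓡'' are incomparable for inclusion (neither R ⊆ R' nor R' ⊆ R) and satisfy R ∩ R' ∈ 𝓡'. Let 𝓡 := { R × I : R ∈ 𝓡', I a dyadic interval [0, 2^{−m}], m ∈ ℕ } be the associated Soria family in ℝ³. Then for every Orlicz function Φ satisfying Φ = o(Φ₂) at ∞, the maximal operator M_𝓡 does not satisfy a weak L^Φ inequality. -/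
open MeasureTheory Set Filter
open scoped ENNReal

noncomputable section

/-!
Fix `k`, put `K = 2k`, and sort `K + 1` of the incomparable rectangles by their first side: their
pairwise intersections give strictly increasing `a, b : ℕ → ℕ` with
`[0, 2^{-a j}] × [0, 2^{-b l}] ∈ 𝓡'` whenever `j, l ≤ K < j + l`.

Test the weak inequality at level `2^{-K}` on the indicator of `E = A × B × [0, 2^{-K}]`, where
`A ⊆ [0,1)` consists of the points whose binary digits at the scales `a 0, …, a (K-1)` vanish, and
`B` likewise for `b`, so `|E| = 2^{-3K}`. Binary digits are independent, and on a dyadic interval of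
length `2^{-L}` those of scale `< L` are constant. Hence if the first of these digits of `x` not to
vanish sits at `a j`, the dyadic interval of length `2^{-a j}` containing `x` meets `A` in relative
measure `2^{-(K-j)}`. So when the same holds for `y` with `b l` and `z ∈ (2^{-m-1}, 2^{-m}]` with
`j + l + m = 2K + 1`, a translate of `[0, 2^{-a j}] × [0, 2^{-b l}] × [0, 2^{-m}]` through `(x,y,z)`
meets `E` with density `2^{1-K}`. For `k < j, l ≤ 2k` these pieces are disjoint, `k²` in number, of
measure `2^{-(2K+4)}` each, and the weak inequality forces `k² 4^k ≤ 16 Φ(C 4^k)`: this contradicts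
`Φ(t) = o(t log² t)` for large `k`.
-/

namespace SoriaSharp

open Asymptotics
open scoped Finset
open Finset (range)

def dyadicCell (L : ℕ) (n : ℤ) : Set ℝ := {x | ⌊(2 : ℝ) ^ L * x⌋ = n}

/-- The binary digit of weight `2⁻⁽ᵖ⁺¹⁾` vanishes. -/
def zeroDigitSet (p : ℕ) : Set ℝ := {x | Even ⌊(2 : ℝ) ^ (p + 1) * x⌋}

lemma floor_two_pow_mul_of_le {M L : ℕ} (h : M ≤ L) (x : ℝ) :
    ⌊(2 : ℝ) ^ M * x⌋ = ⌊(2 : ℝ) ^ L * x⌋ / 2 ^ (L - M) := by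
  have hL : (2 : ℝ) ^ M * x = 2 ^ L * x / ((2 ^ (L - M) : ℕ) : ℝ) := by
    rw [eq_div_iff (by positivity), Nat.cast_pow, Nat.cast_ofNat, mul_right_comm, ← pow_add,
      Nat.add_sub_cancel' h]
  rw [hL, Int.floor_div_natCast]
  norm_cast

lemma measurableSet_dyadicCell (L : ℕ) (n : ℤ) : MeasurableSet (dyadicCell L n) :=
  (Int.measurable_floor.comp (measurable_const_mul _)) (measurableSet_singleton n)

lemma measurableSet_zeroDigitSet (p : ℕ) : MeasurableSet (zeroDigitSet p) :=
  (Int.measurable_floor.comp (measurable_const_mul _))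
    (MeasurableSet.of_discrete (s := {n : ℤ | Even n}))

lemma mem_dyadicCell_floor (L : ℕ) (x : ℝ) : x ∈ dyadicCell L ⌊(2 : ℝ) ^ L * x⌋ := rfl

lemma dyadicCell_eq_Ico (L : ℕ) (n : ℤ) :
    dyadicCell L n = Ico (n * (2 : ℝ)⁻¹ ^ L) ((n + 1) * 2⁻¹ ^ L) := by
  ext x
  have h : (0 : ℝ) < 2 ^ L := by positivity
  simp only [dyadicCell, mem_ofPred_eq, Int.floor_eq_iff, mem_Ico, inv_pow,
    ← div_eq_mul_inv, div_le_iff₀ h, lt_div_iff₀ h, mul_comm x]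

lemma dyadicCell_subset_Icc (L : ℕ) (n : ℤ) :
    dyadicCell L n ⊆ Icc (n * 2⁻¹ ^ L) (n * 2⁻¹ ^ L + 2⁻¹ ^ L) := by
  rw [dyadicCell_eq_Ico, add_one_mul]
  exact Ico_subset_Icc_self

lemma volume_dyadicCell (L : ℕ) (n : ℤ) : volume (dyadicCell L n) = 2⁻¹ ^ L := by
  rw [dyadicCell_eq_Ico, Real.volume_Ico, add_mul, one_mul, add_sub_cancel_left,
    ENNReal.ofReal_pow (by norm_num), ENNReal.ofReal_inv_of_pos two_pos, ENNReal.ofReal_ofNat]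

lemma floor_two_pow_mul_eq_floor_succ_div (L : ℕ) (x : ℝ) :
    ⌊(2 : ℝ) ^ L * x⌋ = ⌊(2 : ℝ) ^ (L + 1) * x⌋ / 2 := by
  simpa using floor_two_pow_mul_of_le L.le_succ x

lemma dyadicCell_eq_union (L : ℕ) (n : ℤ) :
    dyadicCell L n = dyadicCell (L + 1) (2 * n) ∪ dyadicCell (L + 1) (2 * n + 1) := by
  ext x
  simp only [dyadicCell, mem_union, mem_ofPred_eq]
  rw [floor_two_pow_mul_eq_floor_succ_div]
  omega

lemma dyadicCell_inter_zeroDigitSet (L : ℕ) (n : ℤ) :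
    dyadicCell L n ∩ zeroDigitSet L = dyadicCell (L + 1) (2 * n) := by
  ext x
  simp only [dyadicCell, zeroDigitSet, mem_inter_iff, mem_ofPred_eq, Int.even_iff]
  rw [floor_two_pow_mul_eq_floor_succ_div]
  omega

lemma disjoint_dyadicCell {L : ℕ} {n n' : ℤ} (h : n ≠ n') :
    Disjoint (dyadicCell L n) (dyadicCell L n') :=
  disjoint_left.mpr fun _ hx hx' => h (hx.symm.trans hx')

lemma floor_eq_of_mem_dyadicCell {L M : ℕ} (h : M ≤ L) {n : ℤ} {x y : ℝ}
    (hx : x ∈ dyadicCell L n) (hy : y ∈ dyadicCell L n) :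
    ⌊(2 : ℝ) ^ M * y⌋ = ⌊(2 : ℝ) ^ M * x⌋ := by
  rw [floor_two_pow_mul_of_le h, floor_two_pow_mul_of_le h, hx.out, hy.out]

lemma inv_two_pow_succ_add_self (n : ℕ) :
    (2⁻¹ : ℝ≥0∞) ^ (n + 1) + 2⁻¹ ^ (n + 1) = 2⁻¹ ^ n := by
  rw [pow_succ, ← div_eq_mul_inv, ENNReal.add_halves]

lemma ofReal_inv_two_pow (n : ℕ) : ENNReal.ofReal ((2 : ℝ)⁻¹ ^ n) = 2⁻¹ ^ n := by
  rw [ENNReal.ofReal_pow (by norm_num), ENNReal.ofReal_inv_of_pos two_pos, ENNReal.ofReal_ofNat]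

def digitBox (Q : Finset ℕ) : Set ℝ := dyadicCell 0 0 ∩ ⋂ q ∈ Q, zeroDigitSet q

lemma measurableSet_biInter_zeroDigitSet (Q : Finset ℕ) :
    MeasurableSet (⋂ q ∈ Q, zeroDigitSet q) :=
  .biInter Q.countable_toSet fun q _ => measurableSet_zeroDigitSet q

lemma measurableSet_digitBox (Q : Finset ℕ) : MeasurableSet (digitBox Q) :=
  (measurableSet_dyadicCell 0 0).inter (measurableSet_biInter_zeroDigitSet Q)

/-- If `L ∈ Q`, the digit at `L` halves the cell; otherwise split the cell into its two halves. -/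
theorem volume_dyadicCell_inter_biInter_zeroDigitSet {L : ℕ} {Q : Finset ℕ}
    (hQ : ∀ q ∈ Q, L ≤ q) (n : ℤ) :
    volume (dyadicCell L n ∩ ⋂ q ∈ Q, zeroDigitSet q) = 2⁻¹ ^ (L + #Q) := by
  classical
  obtain ⟨N, hN⟩ : ∃ N, ∀ q ∈ Q, q < L + N :=
    ⟨Q.sup id + 1, fun q hq => by have := Finset.le_sup (f := id) hq; simp only [id] at this; omega⟩
  induction N generalizing L Q n with
  | zero =>
    obtain rfl : Q = ∅ := Finset.eq_empty_of_forall_notMem fun q hq => by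
      have := hQ q hq; have := hN q hq; omega
    simp [volume_dyadicCell]
  | succ N ih =>
    by_cases hL : L ∈ Q
    · have hQ' : ∀ q ∈ Q.erase L, L + 1 ≤ q := fun q hq =>
        (hQ q (Finset.mem_of_mem_erase hq)).lt_of_ne' (Finset.ne_of_mem_erase hq)
      have hN' : ∀ q ∈ Q.erase L, q < L + 1 + N := fun q hq => by
        have := hN q (Finset.mem_of_mem_erase hq); omega
      rw [← Finset.insert_erase hL, Finset.set_biInter_insert, ← inter_assoc,
        dyadicCell_inter_zeroDigitSet, ih hQ' _ hN', Finset.card_insert_of_notMem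
        (Finset.notMem_erase L Q), add_assoc, add_comm 1]
    · have hQ' : ∀ q ∈ Q, L + 1 ≤ q := fun q hq => (hQ q hq).lt_of_ne fun h => hL (h ▸ hq)
      have hN' : ∀ q ∈ Q, q < L + 1 + N := fun q hq => by have := hN q hq; omega
      rw [dyadicCell_eq_union, union_inter_distrib_right,
        measure_union ((disjoint_dyadicCell (by omega)).mono inter_subset_left inter_subset_left)
          ((measurableSet_dyadicCell _ _).inter (measurableSet_biInter_zeroDigitSet Q)),
        ih hQ' _ hN', ih hQ' _ hN', add_right_comm, inv_two_pow_succ_add_self]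

lemma volume_digitBox (Q : Finset ℕ) : volume (digitBox Q) = 2⁻¹ ^ #Q := by
  rw [digitBox]
  simpa using volume_dyadicCell_inter_biInter_zeroDigitSet (L := 0) (fun q _ => q.zero_le) 0

lemma digitBox_insert (q : ℕ) (Q : Finset ℕ) :
    digitBox (insert q Q) = digitBox Q ∩ zeroDigitSet q := by
  rw [digitBox, digitBox, Finset.set_biInter_insert, inter_comm (zeroDigitSet q), inter_assoc]

lemma dyadicCell_subset_digitBox {L : ℕ} {n : ℤ} {Q : Finset ℕ} (hQ : ∀ q ∈ Q, q < L)
    (h : (dyadicCell L n ∩ digitBox Q).Nonempty) : dyadicCell L n ⊆ digitBox Q := by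
  obtain ⟨x, hx, hx0, hxQ⟩ := h
  refine fun y hy => ⟨?_, ?_⟩
  · exact (floor_eq_of_mem_dyadicCell L.zero_le hx hy).trans hx0
  · simp only [mem_iInter₂] at hxQ ⊢
    intro q hq
    have hxq := hxQ q hq
    simp only [zeroDigitSet, mem_ofPred_eq] at hxq ⊢
    rwa [floor_eq_of_mem_dyadicCell (hQ q hq) hx hy]

lemma digitBox_eq_inter_filter (Q : Finset ℕ) (L : ℕ) :
    digitBox Q = digitBox (Q.filter (· < L)) ∩ ⋂ q ∈ Q.filter (L ≤ ·), zeroDigitSet q := by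
  ext x
  simp only [digitBox, mem_inter_iff, mem_iInter₂, Finset.mem_filter]
  constructor
  · rintro ⟨h0, h⟩
    exact ⟨⟨h0, fun q hq => h q hq.1⟩, fun q hq => h q hq.1⟩
  · rintro ⟨⟨h0, hlt⟩, hge⟩
    exact ⟨h0, fun q hq => (lt_or_ge q L).elim (fun hl => hlt q ⟨hq, hl⟩) (hge q ⟨hq, ·⟩)⟩

theorem volume_dyadicCell_inter_digitBox {L : ℕ} {n : ℤ} {Q : Finset ℕ}
    (h : (dyadicCell L n ∩ digitBox (Q.filter (· < L))).Nonempty) :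
    volume (dyadicCell L n ∩ digitBox Q) = 2⁻¹ ^ (L + #(Q.filter (L ≤ ·))) := by
  rw [digitBox_eq_inter_filter Q L, ← inter_assoc, inter_eq_left.mpr
    (dyadicCell_subset_digitBox (fun q hq => (Finset.mem_filter.mp hq).2) h)]
  exact volume_dyadicCell_inter_biInter_zeroDigitSet (fun q hq => (Finset.mem_filter.mp hq).2) n

lemma digitBox_anti {Q Q' : Finset ℕ} (h : Q ⊆ Q') : digitBox Q' ⊆ digitBox Q :=
  inter_subset_inter_right _ (biInter_subset_biInter_left (Finset.coe_subset.mpr h))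

def digitLayer (a : ℕ → ℕ) (j : ℕ) : Set ℝ := digitBox ((range j).image a) \ zeroDigitSet (a j)

lemma measurableSet_digitLayer (a : ℕ → ℕ) (j : ℕ) : MeasurableSet (digitLayer a j) :=
  (measurableSet_digitBox _).diff (measurableSet_zeroDigitSet _)

lemma disjoint_digitLayer (a : ℕ → ℕ) {j j' : ℕ} (h : j ≠ j') :
    Disjoint (digitLayer a j) (digitLayer a j') := by
  wlog hlt : j < j' generalizing j j'
  · exact (this h.symm (lt_of_le_of_ne (not_lt.mp hlt) h.symm)).symm
  refine disjoint_left.mpr fun x hx hx' => hx.2 ?_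
  exact mem_iInter₂.mp hx'.1.2 (a j) (Finset.mem_image_of_mem a (Finset.mem_range.mpr hlt))

section StrictMono

variable {a : ℕ → ℕ} (ha : StrictMono a)
include ha

lemma volume_digitLayer (j : ℕ) : volume (digitLayer a j) = 2⁻¹ ^ (j + 1) := by
  have hnot : a j ∉ (range j).image a := by simp [ha.injective.eq_iff]
  have hsub := digitBox_anti (Finset.subset_insert (a j) ((range j).image a))
  rw [digitLayer, ← sdiff_self_inter, ← digitBox_insert, measure_sdiff hsub
    (measurableSet_digitBox _).nullMeasurableSet (measure_ne_top_of_subset hsub (by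
      rw [volume_digitBox]; exact ENNReal.pow_ne_top (by simp))), volume_digitBox,
    volume_digitBox, Finset.card_insert_of_notMem hnot, Finset.card_image_of_injective _
    ha.injective, Finset.card_range]
  exact ENNReal.sub_eq_of_eq_add (ENNReal.pow_ne_top (by simp))
    (inv_two_pow_succ_add_self j).symm

theorem volume_dyadicCell_inter_digitBox_of_mem_digitLayer (K : ℕ) {j : ℕ} {x : ℝ}
    (hx : x ∈ digitLayer a j) :
    volume (dyadicCell (a j) ⌊(2 : ℝ) ^ a j * x⌋ ∩ digitBox ((range K).image a)) =
      2⁻¹ ^ (a j + (K - j)) := by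
  have hlow : ((range K).image a).filter (· < a j) ⊆ (range j).image a := by
    intro q hq
    simp only [Finset.mem_filter, Finset.mem_image, Finset.mem_range] at hq ⊢
    obtain ⟨⟨μ, -, rfl⟩, hμ⟩ := hq
    exact ⟨μ, ha.lt_iff_lt.mp hμ, rfl⟩
  have hhigh : ((range K).image a).filter (a j ≤ ·) = (Finset.Ico j K).image a := by
    rw [Finset.filter_image]
    congr 1
    ext μ
    simp only [Finset.mem_filter, Finset.mem_range, Finset.mem_Ico, ha.le_iff_le]
    omega
  rw [volume_dyadicCell_inter_digitBox ⟨x, mem_dyadicCell_floor _ _, digitBox_anti hlow hx.1⟩,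
    hhigh, Finset.card_image_of_injective _ ha.injective, Nat.card_Ico]

lemma inv_two_pow_le_volume_digitBox_inter_Icc (K : ℕ) {j : ℕ} {x : ℝ} (hx : x ∈ digitLayer a j) :
    2⁻¹ ^ (a j + (K - j)) ≤ volume (digitBox ((range K).image a) ∩
      Icc (⌊(2 : ℝ) ^ a j * x⌋ * 2⁻¹ ^ a j) (⌊(2 : ℝ) ^ a j * x⌋ * 2⁻¹ ^ a j + 2⁻¹ ^ a j)) := by
  rw [← volume_dyadicCell_inter_digitBox_of_mem_digitLayer ha K hx]
  exact measure_mono fun y hy => ⟨hy.2, dyadicCell_subset_Icc _ _ hy.1⟩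

end StrictMono

lemma two_zpow_neg_natCast (m : ℕ) : (2 : ℝ) ^ (-(m : ℤ)) = 2⁻¹ ^ m := by
  rw [zpow_neg, zpow_natCast, inv_pow]

def stdDyadicRect {n : ℕ} (m : Fin n → ℕ) : Set (Fin n → ℝ) :=
  stdRect n fun i => (2 : ℝ) ^ (-(m i : ℤ))

lemma stdDyadicRect_subset_iff {n : ℕ} {m m' : Fin n → ℕ} :
    stdDyadicRect m ⊆ stdDyadicRect m' ↔ m' ≤ m := by
  have hne : ∀ i, Icc (0 : ℝ) (2⁻¹ ^ m i) ≠ ∅ := fun i =>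
    (nonempty_Icc.mpr (by positivity)).ne_empty
  simp only [stdDyadicRect, stdRect, two_zpow_neg_natCast, univ_pi_subset_univ_pi_iff, hne,
    exists_false, or_false, Pi.le_def]
  refine forall_congr' fun i => ?_
  rw [Icc_subset_Icc_iff (by positivity),
    pow_le_pow_iff_right_of_lt_one₀ (by norm_num) (by norm_num)]
  exact and_iff_right le_rfl

lemma stdDyadicRect_inter {n : ℕ} (m m' : Fin n → ℕ) :
    stdDyadicRect m ∩ stdDyadicRect m' = stdDyadicRect (m ⊔ m') := by
  simp only [stdDyadicRect, stdRect, ← pi_inter_distrib, Icc_inter_Icc, max_self, Pi.sup_apply,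
    two_zpow_neg_natCast, (pow_right_anti₀ (by norm_num : (0 : ℝ) ≤ 2⁻¹) (by norm_num)).map_max]

lemma le_maximalFn {n : ℕ} {𝓡 : Set (Set (Fin n → ℝ))} {R : Set (Fin n → ℝ)} (hR : R ∈ 𝓡)
    {v x : Fin n → ℝ} (hx : x ∈ (fun y => v + y) '' R) (f : (Fin n → ℝ) → ℝ) :
    (∫⁻ y in (fun y => v + y) '' R, ENNReal.ofReal |f y|) / volume R ≤ maximalFn 𝓡 f x :=
  le_iSup₂_of_le R hR (le_iSup₂_of_le v hx le_rfl)

lemma comp_abs_indicator_one {α M : Type*} [Zero M] (g : ℝ → M) (hg : g 0 = 0) (E : Set α) :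
    (fun z => g |E.indicator 1 z|) = E.indicator fun _ => g 1 := by
  funext z
  by_cases hz : z ∈ E <;> simp [hz, hg]

lemma image_add_pi_Icc_zero {n : ℕ} (v s : Fin n → ℝ) :
    (fun y => v + y) '' univ.pi (fun i => Icc 0 (s i)) =
      univ.pi fun i => Icc (v i) (v i + s i) := by
  ext x
  simp only [image_add_left, mem_preimage, mem_univ_pi, Pi.add_apply, Pi.neg_apply, mem_Icc,
    le_neg_add_iff_add_le, add_zero, neg_add_le_iff_le_add]

theorem prod_div_prod_le_maximalFn {n : ℕ} {𝓡 : Set (Set (Fin n → ℝ))} {s v x : Fin n → ℝ}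
    (hR : univ.pi (fun i => Icc 0 (s i)) ∈ 𝓡) (hx : ∀ i, x i ∈ Icc (v i) (v i + s i))
    {E : Fin n → Set ℝ} (hE : ∀ i, MeasurableSet (E i)) :
    (∏ i, volume (E i ∩ Icc (v i) (v i + s i))) / ∏ i, volume (Icc 0 (s i)) ≤
      maximalFn 𝓡 ((univ.pi E).indicator 1) x := by
  have hmeas : MeasurableSet (univ.pi E) := .univ_pi hE
  have key := le_maximalFn hR (v := v) (x := x)
    (by rw [image_add_pi_Icc_zero]; exact mem_univ_pi.mpr hx) ((univ.pi E).indicator 1)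
  rwa [comp_abs_indicator_one ENNReal.ofReal ENNReal.ofReal_zero, image_add_pi_Icc_zero,
    lintegral_indicator_const hmeas, ENNReal.ofReal_one, one_mul, Measure.restrict_apply hmeas,
    ← pi_inter_distrib, volume_pi_pi, volume_pi_pi] at key

def soriaFamily (𝓡' : Set (Set (Fin 2 → ℝ))) : Set (Set (Fin 3 → ℝ)) :=
  { S | ∃ R ∈ 𝓡', ∃ m : ℕ,
    S = { x : Fin 3 → ℝ | (fun i : Fin 2 => x i.castSucc) ∈ R ∧
      x 2 ∈ Set.Icc 0 ((2 : ℝ) ^ (-(m : ℤ))) } }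

lemma pi_Icc_mem_soriaFamily {𝓡' : Set (Set (Fin 2 → ℝ))} {p q : ℕ}
    (h : stdDyadicRect ![p, q] ∈ 𝓡') (m : ℕ) :
    univ.pi (fun i => Icc 0 (![2⁻¹ ^ p, 2⁻¹ ^ q, 2⁻¹ ^ m] i)) ∈ soriaFamily 𝓡' := by
  refine ⟨_, h, m, ?_⟩
  ext x
  simp only [stdDyadicRect, stdRect, mem_univ_pi, mem_ofPred_eq, Fin.forall_fin_succ,
    IsEmpty.forall_iff, and_true, two_zpow_neg_natCast]
  simp [and_assoc]

lemma volume_Icc_zero_inv_two_pow (n : ℕ) : volume (Icc (0 : ℝ) (2⁻¹ ^ n)) = 2⁻¹ ^ n := by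
  rw [Real.volume_Icc, sub_zero, ofReal_inv_two_pow]

lemma volume_Ioc_inv_two_pow (n : ℕ) :
    volume (Ioc ((2 : ℝ)⁻¹ ^ (n + 1)) (2⁻¹ ^ n)) = 2⁻¹ ^ (n + 1) := by
  rw [Real.volume_Ioc, ← ofReal_inv_two_pow]
  congr 1
  ring

lemma disjoint_Ioc_inv_two_pow {m m' : ℕ} (h : m ≠ m') :
    Disjoint (Ioc ((2 : ℝ)⁻¹ ^ (m + 1)) (2⁻¹ ^ m)) (Ioc (2⁻¹ ^ (m' + 1)) (2⁻¹ ^ m')) := by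
  wlog hlt : m < m' generalizing m m'
  · exact (this h.symm (by omega)).symm
  rw [Ioc_disjoint_Ioc]
  exact (min_le_right _ _).trans
    ((pow_right_anti₀ (by norm_num) (by norm_num) hlt).trans (le_max_left _ _))

def testFactor (a b : ℕ → ℕ) (K : ℕ) : Fin 3 → Set ℝ :=
  ![digitBox ((range K).image a), digitBox ((range K).image b), Icc 0 (2⁻¹ ^ K)]

def soriaPiece (a b : ℕ → ℕ) (j l m : ℕ) : Set (Fin 3 → ℝ) :=
  univ.pi ![digitLayer a j, digitLayer b l, Ioc (2⁻¹ ^ (m + 1)) (2⁻¹ ^ m)]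

lemma measurableSet_testFactor (a b : ℕ → ℕ) (K : ℕ) (i : Fin 3) :
    MeasurableSet (testFactor a b K i) := by
  fin_cases i <;> simp [testFactor, measurableSet_digitBox, measurableSet_Icc]

lemma measurableSet_soriaPiece (a b : ℕ → ℕ) (j l m : ℕ) :
    MeasurableSet (soriaPiece a b j l m) :=
  .univ_pi fun i => by fin_cases i <;> simp [measurableSet_digitLayer, measurableSet_Ioc]

lemma disjoint_soriaPiece (a b : ℕ → ℕ) {j l m j' l' m' : ℕ} (h : j ≠ j' ∨ m ≠ m') :
    Disjoint (soriaPiece a b j l m) (soriaPiece a b j' l' m') := by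
  rw [soriaPiece, soriaPiece, disjoint_univ_pi]
  rcases h with h | h
  · exact ⟨0, disjoint_digitLayer a h⟩
  · exact ⟨2, disjoint_Ioc_inv_two_pow h⟩

section StrictMono

variable {a b : ℕ → ℕ} (ha : StrictMono a) (hb : StrictMono b)
include ha hb

lemma volume_testSet (K : ℕ) : volume (univ.pi (testFactor a b K)) = 2⁻¹ ^ (3 * K) := by
  simp only [volume_pi_pi, Fin.prod_univ_three, testFactor, Matrix.cons_val_zero,
    Matrix.cons_val_one, Matrix.cons_val_two, Matrix.head_cons, Matrix.tail_cons, volume_digitBox,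
    Finset.card_image_of_injective _ ha.injective, Finset.card_image_of_injective _ hb.injective,
    Finset.card_range, volume_Icc_zero_inv_two_pow, ← pow_add]
  ring_nf

lemma volume_soriaPiece (j l m : ℕ) :
    volume (soriaPiece a b j l m) = 2⁻¹ ^ (j + l + m + 3) := by
  simp only [soriaPiece, volume_pi_pi, Fin.prod_univ_three, Matrix.cons_val_zero,
    Matrix.cons_val_one, Matrix.cons_val_two, Matrix.head_cons, Matrix.tail_cons,
    volume_digitLayer ha, volume_digitLayer hb, volume_Ioc_inv_two_pow, ← pow_add]
  ring_nf

theorem soriaPiece_subset_levelSet {𝓡' : Set (Set (Fin 2 → ℝ))} {K j l m : ℕ}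
    (hab : stdDyadicRect ![a j, b l] ∈ 𝓡') (hj : j ≤ K) (hl : l ≤ K) (hmK : m ≤ K)
    (hm : j + l + m = 2 * K + 1) :
    soriaPiece a b j l m ⊆ {z | ENNReal.ofReal (2⁻¹ ^ K) <
      maximalFn (soriaFamily 𝓡') ((univ.pi (testFactor a b K)).indicator 1) z} := by
  obtain ⟨K, rfl⟩ : ∃ K', K = K' + 1 := ⟨K - 1, by omega⟩
  intro z hz
  have hz0 : z 0 ∈ digitLayer a j := hz 0 trivial
  have hz1 : z 1 ∈ digitLayer b l := hz 1 trivial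
  have hz2 : z 2 ∈ Ioc (2⁻¹ ^ (m + 1)) (2⁻¹ ^ m) := hz 2 trivial
  set n₁ := ⌊(2 : ℝ) ^ a j * z 0⌋
  set n₂ := ⌊(2 : ℝ) ^ b l * z 1⌋
  have hmax := prod_div_prod_le_maximalFn (pi_Icc_mem_soriaFamily hab m)
    (v := ![n₁ * 2⁻¹ ^ a j, n₂ * 2⁻¹ ^ b l, 0]) (x := z) ?hx (measurableSet_testFactor a b (K + 1))
  case hx =>
    intro i
    fin_cases i
    · exact dyadicCell_subset_Icc _ _ (mem_dyadicCell_floor _ _)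
    · exact dyadicCell_subset_Icc _ _ (mem_dyadicCell_floor _ _)
    · exact ⟨(by positivity : (0 : ℝ) ≤ _).trans hz2.1.le, by simpa using hz2.2⟩
  refine lt_of_lt_of_le ?_ hmax
  simp only [Fin.prod_univ_three, testFactor, Matrix.cons_val_zero, Matrix.cons_val_one,
    Matrix.cons_val_two, Matrix.head_cons, Matrix.tail_cons, volume_Icc_zero_inv_two_pow, zero_add,
    ofReal_inv_two_pow]
  have h0 := inv_two_pow_le_volume_digitBox_inter_Icc ha (K + 1) hz0
  have h1 := inv_two_pow_le_volume_digitBox_inter_Icc hb (K + 1) hz1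
  have h2 : Icc (0 : ℝ) (2⁻¹ ^ (K + 1)) ∩ Icc 0 (2⁻¹ ^ m) = Icc 0 (2⁻¹ ^ (K + 1)) :=
    inter_eq_left.mpr (Icc_subset_Icc_right (pow_right_anti₀ (by norm_num) (by norm_num) hmK))
  rw [h2, volume_Icc_zero_inv_two_pow]
  calc (2⁻¹ : ℝ≥0∞) ^ (K + 1) < 2⁻¹ ^ K := by
        rw [pow_succ, ← div_eq_mul_inv]
        exact ENNReal.half_lt_self (by simp) (by simp)
    _ = 2⁻¹ ^ (a j + (K + 1 - j)) * 2⁻¹ ^ (b l + (K + 1 - l)) * 2⁻¹ ^ (K + 1) /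
          (2⁻¹ ^ a j * 2⁻¹ ^ b l * 2⁻¹ ^ m) := by
        rw [ENNReal.eq_div_iff (by simp) (by simp [ENNReal.mul_eq_top]), ← pow_add, ← pow_add,
          ← pow_add, ← pow_add, ← pow_add]
        congr 1
        omega
    _ ≤ _ := by gcongr

end StrictMono

theorem sq_mul_le_volume_levelSet {𝓡' : Set (Set (Fin 2 → ℝ))} {a b : ℕ → ℕ} (ha : StrictMono a)
    (hb : StrictMono b) {k : ℕ}
    (hab : ∀ j ≤ 2 * k, ∀ l ≤ 2 * k, 2 * k < j + l → stdDyadicRect ![a j, b l] ∈ 𝓡') :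
    (k : ℝ≥0∞) ^ 2 * 2⁻¹ ^ (4 * k + 4) ≤ volume {z | ENNReal.ofReal (2⁻¹ ^ (2 * k)) <
      maximalFn (soriaFamily 𝓡') ((univ.pi (testFactor a b (2 * k))).indicator 1) z} := by
  set I := Finset.Ioc k (2 * k) ×ˢ Finset.Ioc k (2 * k)
  set piece : ℕ × ℕ → Set (Fin 3 → ℝ) := fun p => soriaPiece a b p.1 p.2 (4 * k + 1 - p.1 - p.2)
  have hI : ∀ p ∈ I, k < p.1 ∧ p.1 ≤ 2 * k ∧ k < p.2 ∧ p.2 ≤ 2 * k := fun p hp => by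
    simpa [I, and_assoc] using hp
  have hdisj : (I : Set (ℕ × ℕ)).PairwiseDisjoint piece := fun p hp q hq hpq =>
    disjoint_soriaPiece a b <| by
      have := hI p hp; have := hI q hq; rw [Ne, Prod.ext_iff] at hpq; omega
  calc (k : ℝ≥0∞) ^ 2 * 2⁻¹ ^ (4 * k + 4) = ∑ p ∈ I, volume (piece p) := by
        rw [Finset.sum_congr rfl fun p hp => (volume_soriaPiece ha hb _ _ _).trans
          (congrArg _ (show _ = 4 * k + 4 by have := hI p hp; omega)), Finset.sum_const,
          Finset.card_product, Nat.card_Ioc, show 2 * k - k = k by omega, nsmul_eq_mul]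
        push_cast
        ring
    _ = volume (⋃ p ∈ I, piece p) :=
        (measure_biUnion_finset hdisj fun p _ => measurableSet_soriaPiece a b _ _ _).symm
    _ ≤ _ := measure_mono <| iUnion₂_subset fun p hp => by
        obtain ⟨h1, h2, h3, h4⟩ := hI p hp
        exact soriaPiece_subset_levelSet ha hb (hab _ h2 _ h4 (by omega)) h2 h4 (by omega)
          (by omega)

lemma exists_strictMono_extend {K : ℕ} {f : Fin (K + 1) → ℕ} (hf : StrictMono f) :
    ∃ g : ℕ → ℕ, StrictMono g ∧ ∀ i : Fin (K + 1), g i = f i := by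
  refine ⟨fun n => f ⟨min n K, by omega⟩ + (n - K), strictMono_nat_of_lt_succ fun n => ?_,
    fun i => ?_⟩
  · rcases lt_or_ge n K with h | h
    · have : f ⟨min n K, by omega⟩ < f ⟨min (n + 1) K, by omega⟩ :=
        hf (Fin.mk_lt_mk.mpr (by omega))
      omega
    · simp only [min_eq_right h, min_eq_right (h.trans n.le_succ)]
      omega
  · simp [min_eq_left (Nat.le_of_lt_succ i.2), Nat.sub_eq_zero_of_le (Nat.le_of_lt_succ i.2)]

theorem exists_strictMono_strictAnti_of_incomparable {F : Finset (Set (Fin 2 → ℝ))}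
    (hdy : ∀ R ∈ F, IsStandardDyadicRect R) (hinc : ∀ R ∈ F, ∀ R' ∈ F, R ≠ R' → ¬ R ⊆ R')
    {K : ℕ} (hK : K + 1 ≤ #F) :
    ∃ x y : Fin (K + 1) → ℕ, StrictMono x ∧ StrictAnti y ∧ ∀ i, stdDyadicRect ![x i, y i] ∈ F := by
  classical
  choose! m hm using hdy
  have hlt : ∀ R ∈ F, ∀ R' ∈ F, R ≠ R' → m R 0 ≤ m R' 0 → m R' 1 < m R 1 := by
    intro R hR R' hR' hne h0
    by_contra! h1
    apply hinc R' hR' R hR hne.symm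
    rw [hm R hR, hm R' hR']
    refine stdDyadicRect_subset_iff.mpr fun i => ?_
    fin_cases i
    exacts [h0, h1]
  have hinj : Set.InjOn (m · 0) F := fun R hR R' hR' h => by
    by_contra hne
    exact (hlt R hR R' hR' hne h.le).not_gt (hlt R' hR' R hR (Ne.symm hne) h.ge)
  have hcard : K + 1 ≤ #(F.image (m · 0)) := by rwa [Finset.card_image_of_injOn hinj]
  set e := (F.image (m · 0)).orderEmbOfCardLe hcard
  have hex : ∀ i, ∃ R ∈ F, m R 0 = e i := fun i => by
    simpa using (F.image (m · 0)).orderEmbOfCardLe_mem hcard i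
  choose R hRF hR0 using hex
  refine ⟨e, fun i => m (R i) 1, e.strictMono, fun i i' h => ?_, fun i => ?_⟩
  · have hne : R i ≠ R i' := fun h' => (e.strictMono h).ne (by rw [← hR0, ← hR0, h'])
    exact hlt _ (hRF i) _ (hRF i') hne ((hR0 i).trans_le ((e.strictMono h).le.trans (hR0 i').ge))
  · convert hRF i
    rw [hm _ (hRF i)]
    congr
    funext t
    fin_cases t
    exacts [(hR0 i).symm, rfl]

/-- `[0, 2^{-a j}] × [0, 2^{-b l}]` is the intersection of the `j`-th and the `(K - l)`-th rectangle
in the order of their first sides. -/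
theorem exists_staircase {𝓡' : Set (Set (Fin 2 → ℝ))} {F : Finset (Set (Fin 2 → ℝ))}
    (hdy : ∀ R ∈ F, IsStandardDyadicRect R) (hinc : ∀ R ∈ F, ∀ R' ∈ F, R ≠ R' → ¬ R ⊆ R')
    (hinter : ∀ R ∈ F, ∀ R' ∈ F, R ≠ R' → R ∩ R' ∈ 𝓡') {K : ℕ} (hK : K + 1 ≤ #F) :
    ∃ a b : ℕ → ℕ, StrictMono a ∧ StrictMono b ∧
      ∀ j ≤ K, ∀ l ≤ K, K < j + l → stdDyadicRect ![a j, b l] ∈ 𝓡' := by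
  obtain ⟨x, y, hx, hy, hxyF⟩ := exists_strictMono_strictAnti_of_incomparable hdy hinc hK
  obtain ⟨a, ha, hax⟩ := exists_strictMono_extend hx
  obtain ⟨b, hb, hby⟩ := exists_strictMono_extend (hy.comp Fin.rev_strictAnti)
  refine ⟨a, b, ha, hb, fun j hj l hl hjl => ?_⟩
  have hlt : (Fin.rev ⟨l, by omega⟩ : Fin (K + 1)) < ⟨j, by omega⟩ := by
    simp only [Fin.lt_def, Fin.val_rev]
    omega
  have hne : stdDyadicRect ![x (Fin.rev ⟨l, by omega⟩), y (Fin.rev ⟨l, by omega⟩)] ≠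
      stdDyadicRect ![x ⟨j, by omega⟩, y ⟨j, by omega⟩] := fun h => by
    have := (stdDyadicRect_subset_iff.mp h.le) 0
    simp only [Matrix.cons_val_zero] at this
    exact (hx hlt).not_ge this
  have key := hinter _ (hxyF _) _ (hxyF _) hne
  rw [stdDyadicRect_inter] at key
  convert key using 2
  funext t
  fin_cases t
  · simp [hax ⟨j, by omega⟩, (hx hlt).le]
  · simp [hby ⟨l, by omega⟩, (hy hlt).le]

lemma phiD_two_pos {t : ℝ} (ht : 0 < t) : 0 < phiD 2 t := mul_pos ht (by positivity)

lemma isBigO_phiD_two_mul_two_pow {C : ℝ} (hC : 0 < C) :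
    (fun n : ℕ => phiD 2 (C * 2 ^ n)) =O[atTop] fun n => (2 : ℝ) ^ n * n ^ 2 := by
  set c := |Real.log C| + Real.log 2
  have hc : 0 ≤ c := by positivity
  refine IsBigO.of_bound (C * (1 + c) ^ 2) ((eventually_ge_atTop 1).mono fun n hn => ?_)
  have hn' : (1 : ℝ) ≤ n := by exact_mod_cast hn
  have hlog : max (Real.log (C * 2 ^ n)) 0 ≤ c * n := by
    rw [Real.log_mul hC.ne' (by positivity), Real.log_pow]
    refine max_le ?_ (by positivity)
    nlinarith [le_abs_self (Real.log C), mul_le_mul_of_nonneg_left hn' (abs_nonneg (Real.log C))]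
  have hsq : 1 + max (Real.log (C * 2 ^ n)) 0 ^ 2 ≤ (1 + c) ^ 2 * n ^ 2 := by
    nlinarith [pow_le_pow_left₀ (le_max_right _ _) hlog 2, one_le_pow₀ (n := 2) hn']
  rw [Real.norm_of_nonneg (phiD_two_pos (by positivity)).le, Real.norm_of_nonneg (by positivity),
    phiD]
  calc C * 2 ^ n * (1 + max (Real.log (C * 2 ^ n)) 0 ^ 2)
      ≤ C * 2 ^ n * ((1 + c) ^ 2 * n ^ 2) := by gcongr
    _ = C * (1 + c) ^ 2 * (2 ^ n * n ^ 2) := by ring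

theorem isLittleO_comp_mul_two_pow {Φ : ℝ → ℝ}
    (hΦ : Tendsto (fun t => Φ t / phiD 2 t) atTop (nhds 0)) {C : ℝ} (hC : 0 < C) :
    (fun n : ℕ => Φ (C * 2 ^ n)) =o[atTop] fun n => (2 : ℝ) ^ n * n ^ 2 := by
  have hΦo : Φ =o[atTop] phiD 2 := (isLittleO_iff_tendsto' ((eventually_gt_atTop 0).mono
    fun t ht h => absurd h (phiD_two_pos ht).ne')).mpr hΦ
  exact (hΦo.comp_tendsto ((tendsto_pow_atTop_atTop_of_one_lt one_lt_two).const_mul_atTop hC)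
    ).trans_isBigO (isBigO_phiD_two_mul_two_pow hC)

lemma exists_sixteen_mul_lt {Φ : ℝ → ℝ} (hΦ : Tendsto (fun t => Φ t / phiD 2 t) atTop (nhds 0))
    {C : ℝ} (hC : 0 < C) : ∃ k : ℕ, 16 * Φ (C * 2 ^ (2 * k)) < k ^ 2 * 2 ^ (2 * k) := by
  have h := ((isLittleO_comp_mul_two_pow hΦ hC).comp_tendsto
    (tendsto_atTop_mono (fun n => by omega : ∀ n : ℕ, n ≤ 2 * n) tendsto_id)).def
    (c := 1 / 128) (by norm_num)
  obtain ⟨k, hk, hk0⟩ := (h.and (eventually_gt_atTop 0)).exists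
  simp only [Function.comp, Real.norm_eq_abs, Nat.cast_mul, Nat.cast_ofNat] at hk
  rw [abs_of_nonneg (by positivity : (0 : ℝ) ≤ 2 ^ (2 * k) * (2 * k) ^ 2)] at hk
  have hpos : (0 : ℝ) < k ^ 2 * 2 ^ (2 * k) := by positivity
  exact ⟨k, by nlinarith [le_abs_self (Φ (C * 2 ^ (2 * k)))]⟩

lemma sq_mul_le_of_le_ofReal_mul {k : ℕ} {x : ℝ} (hx : 0 ≤ x)
    (h : (k : ℝ≥0∞) ^ 2 * 2⁻¹ ^ (4 * k + 4) ≤ ENNReal.ofReal x * 2⁻¹ ^ (3 * (2 * k))) :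
    (k : ℝ) ^ 2 * 2 ^ (2 * k) ≤ 16 * x := by
  rw [← ENNReal.ofReal_natCast, ← ENNReal.ofReal_pow (Nat.cast_nonneg _),
    ← ofReal_inv_two_pow, ← ofReal_inv_two_pow, ← ENNReal.ofReal_mul (by positivity),
    ← ENNReal.ofReal_mul hx, ENNReal.ofReal_le_ofReal_iff (by positivity)] at h
  have h4 : (2 : ℝ)⁻¹ ^ (4 * k + 4) = (2 ^ (4 * k) * 16)⁻¹ := by
    rw [inv_pow, pow_add]
    norm_num
  have h6 : (2 : ℝ)⁻¹ ^ (3 * (2 * k)) = (2 ^ (4 * k) * 2 ^ (2 * k))⁻¹ := by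
    rw [inv_pow, ← pow_add]
    ring_nf
  rw [h4, h6, ← div_eq_mul_inv, ← div_eq_mul_inv, div_le_div_iff₀ (by positivity)
    (by positivity)] at h
  have : (0 : ℝ) < 2 ^ (4 * k) := by positivity
  nlinarith

end SoriaSharp

open SoriaSharp in
/-- Remark `rmk.stok2008`, after Stokolos' theorem on Soria bases.
If `𝓡'` (standard dyadic rectangles in `ℝ²`) contains arbitrarily large finite subfamilies
of pairwise incomparable rectangles whose pairwise intersections stay in `𝓡'`, then the
maximal operator of the Soria family `𝓡 = {R × [0,2^{-m}] : R ∈ 𝓡', m ∈ ℕ}` in `ℝ³`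
satisfies no weak `L^Φ` inequality for any Orlicz `Φ = o(Φ₂)` at `∞`. -/
theorem soria_sharp (𝓡' : Set (Set (Fin 2 → ℝ)))
    (h𝓡' : ∀ R ∈ 𝓡', IsStandardDyadicRect R)
    (H : ∀ k : ℕ, ∃ F : Finset (Set (Fin 2 → ℝ)), ↑F ⊆ 𝓡' ∧ 2 * k + 1 ≤ F.card ∧
      ∀ R ∈ F, ∀ R' ∈ F, R ≠ R' →
        (¬ R ⊆ R' ∧ ¬ R' ⊆ R) ∧ R ∩ R' ∈ 𝓡') :
    ∀ Φ : ℝ → ℝ, IsOrlicz Φ →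
      Tendsto (fun t => Φ t / phiD 2 t) atTop (nhds 0) →
      ¬ WeakOrlicz
        { S : Set (Fin 3 → ℝ) | ∃ R ∈ 𝓡', ∃ m : ℕ,
          S = { x : Fin 3 → ℝ | (fun i : Fin 2 => x i.castSucc) ∈ R ∧
            x 2 ∈ Set.Icc 0 ((2 : ℝ) ^ (-(m : ℤ))) } } Φ := by
  rintro Φ ⟨-, hΦmono, hΦ0⟩ hΦ ⟨C, hC, hweak⟩
  obtain ⟨k, hk⟩ := exists_sixteen_mul_lt hΦ hC
  obtain ⟨F, hF𝓡, hFcard, hF⟩ := H (2 * k)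
  obtain ⟨a, b, ha, hb, hab⟩ := exists_staircase (fun R hR => h𝓡' R (hF𝓡 hR))
    (fun R hR R' hR' h => (hF R hR R' hR' h).1.1) (fun R hR R' hR' h => (hF R hR R' hR' h).2)
    (by omega : 2 * k + 1 ≤ F.card)
  set E := univ.pi (testFactor a b (2 * k))
  have hE : MeasurableSet E := .univ_pi (measurableSet_testFactor a b _)
  have hint : Integrable fun z => Φ |E.indicator 1 z| := by
    rw [comp_abs_indicator_one Φ hΦ0, integrable_indicator_iff hE]
    exact integrableOn_const (by rw [volume_testSet ha hb]; simp)
  have hbound := (sq_mul_le_volume_levelSet ha hb hab).trans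
    (hweak (E.indicator 1) (measurable_one.indicator hE) hint (2⁻¹ ^ (2 * k)) (by positivity))
  rw [comp_abs_indicator_one (fun t => ENNReal.ofReal (Φ (C * t / 2⁻¹ ^ (2 * k)))) (by simp [hΦ0]),
    lintegral_indicator_const hE, volume_testSet ha hb, mul_one, div_eq_mul_inv, inv_pow, inv_inv]
    at hbound
  have hΦnn : 0 ≤ Φ (C * 2 ^ (2 * k)) :=
    hΦ0 ▸ hΦmono self_mem_Ici (mem_Ici.mpr (by positivity)) (by positivity)
  exact hk.not_ge (sq_mul_le_of_le_ofReal_mul hΦnn hbound)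

end
end

section
/- Let n ≥ 2 and k ∈ ℕ, and for each 1 ≤ i ≤ n let m^i_0 > m^i_1 > ⋯ > m^i_k be strictly decreasing positive integers. Set R₀ := ∏_{i=1}^n [0, 2^{−m^i_k}]. For integers m ≥ 1 and l ≥ 0 let C(m, l) denote the set of nonincreasing l-tuples of integers in {0, …, m−1}. For J = (j₁, …, j_{n−1}) ∈ C(k+1, n−1), with the conventions j₀ := k and j_n := 0, define Y_J := { x ∈ R₀ : ∏_{i=1}^n ∏_{μ=j_i}^{j_{i−1}} r_{m^i_μ}(x_i) = 1 }. For 2 ≤ r ≤ n and integers k ≥ j₁ ≥ ⋯ ≥ j_{r−1} ≥ 0 define E_{j₁,…,j_{r−1}} := ⋃_{J' ∈ C(j_{r−1}+1, n−r)} Y_{(j₁,…,j_{r−1},J')}. Then for every 2 ≤ r ≤ n and every nonincreasing sequence k ≥ j₁ ≥ ⋯ ≥ j_{r−2} ≥ 0 (the empty sequence when r = 2, with the convention j₀ := k), one has |⋃_{j=0}^{j_{r−2}} E_{j₁,…,j_{r−2},j}| ≥ (1/2) ∑_{j=0}^{j_{r−2}} |E_{j₁,…,j_{r−2},j}|. 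-/
open MeasureTheory Set Filter
open scoped ENNReal

noncomputable section

/-! Fix `j₁, …, j_{r-2}` and write `i = r - 1` for the distinguished coordinate. Membership of `x`
in `E_{…,j}` splits into `xᵢ ∈ A_j` and conditions on the other coordinates, where
`A_j ⊆ [0, 2^{-m_k}]` prescribes the digits `r_{m_μ}(xᵢ) = 1` for `j ≤ μ ≤ j_{r-2}`. The `A_j`
increase with `j`, so the slices `{xᵢ ∈ A_j \ A_{j-1}}` are disjoint. Since `m_{j-1} > m_μ` for
`μ ≥ j`, translating `xᵢ` by `2^{-m_{j-1}}` flips the digit `r_{m_{j-1}}` and keeps the coarser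
ones, so it maps `E_{…,j} ∩ {xᵢ ∈ A_{j-1}}` (off a null hyperplane) into the slice of `E_{…,j}`.
Hence each `E_{…,j}` has at least half of its measure in its own slice, and summing over the
disjoint slices of the union gives the claim. -/

open Function

lemma floor_two_pow_mul_eq_ediv {q M : ℕ} (hqM : q ≤ M) (x : ℝ) :
    ⌊(2 : ℝ) ^ q * x⌋ = ⌊(2 : ℝ) ^ M * x⌋ / 2 ^ (M - q) := by
  have h : (2 : ℝ) ^ q * x = (2 : ℝ) ^ M * x / ((2 ^ (M - q) : ℕ) : ℝ) := by
    rw [Nat.cast_pow, Nat.cast_ofNat, ← Nat.sub_add_cancel hqM, pow_add, Nat.add_sub_cancel]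
    field_simp
  rw [h, Int.floor_div_natCast]
  push_cast
  rfl

lemma floor_two_pow_mul_add_inv (M : ℕ) (t : ℝ) :
    ⌊(2 : ℝ) ^ M * (t + ((2 : ℝ) ^ M)⁻¹)⌋ = ⌊(2 : ℝ) ^ M * t⌋ + 1 := by
  rw [mul_add, mul_inv_cancel₀ (by positivity), Int.floor_add_one]

lemma rademacher_eq_one_iff_even {q : ℕ} (hq : 1 ≤ q) (t : ℝ) :
    rademacher q t = 1 ↔ Even ⌊(2 : ℝ) ^ q * t⌋ := by
  have hfloor : ⌊(2 : ℝ) ^ (q - 1) * t⌋ = ⌊(2 : ℝ) ^ q * t⌋ / 2 := by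
    simpa [Nat.sub_sub_self hq] using floor_two_pow_mul_eq_ediv (Nat.sub_le q 1) t
  have hfract : Int.fract ((2 : ℝ) ^ (q - 1) * t) < 1 / 2 ↔
      ⌊(2 : ℝ) ^ q * t⌋ < 2 * (⌊(2 : ℝ) ^ q * t⌋ / 2) + 1 := by
    rw [Int.floor_lt, Int.fract, hfloor, ← Nat.sub_add_cancel hq, pow_succ, Nat.add_sub_cancel]
    push_cast
    constructor <;> intro h <;> linarith
  rw [rademacher, ite_eq_left_iff, not_imp_comm, hfract, Int.even_iff]
  simp only [zero_ne_one, not_false_eq_true, forall_const]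
  omega

lemma rademacher_add_inv_two_pow_iff {q M : ℕ} (hq : 1 ≤ q) (hqM : q < M) {t : ℝ}
    (ht : rademacher M t = 1) :
    rademacher q (t + ((2 : ℝ) ^ M)⁻¹) = 1 ↔ rademacher q t = 1 := by
  rw [rademacher_eq_one_iff_even (hq.trans hqM.le)] at ht
  obtain ⟨c, hc⟩ := ht
  rw [rademacher_eq_one_iff_even hq, rademacher_eq_one_iff_even hq,
    floor_two_pow_mul_eq_ediv hqM.le, floor_two_pow_mul_eq_ediv hqM.le,
    floor_two_pow_mul_add_inv, hc, show M - q = (M - q - 1) + 1 by omega, pow_succ',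
    ← Int.ediv_ediv_of_nonneg zero_le_two, ← Int.ediv_ediv_of_nonneg zero_le_two,
    show (c + c + 1) / 2 = (c + c) / 2 by omega]

lemma rademacher_add_inv_two_pow_self {M : ℕ} (hM : 1 ≤ M) {t : ℝ} (ht : rademacher M t = 1) :
    rademacher M (t + ((2 : ℝ) ^ M)⁻¹) ≠ 1 := by
  rw [rademacher_eq_one_iff_even hM] at ht
  rw [Ne, rademacher_eq_one_iff_even hM, floor_two_pow_mul_add_inv, Int.even_add_one, not_not]
  exact ht

lemma add_inv_two_pow_lt {b M : ℕ} (hbM : b < M) {t : ℝ}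
    (htb : t < ((2 : ℝ) ^ b)⁻¹) (ht : rademacher M t = 1) :
    t + ((2 : ℝ) ^ M)⁻¹ < ((2 : ℝ) ^ b)⁻¹ := by
  rw [rademacher_eq_one_iff_even (by omega)] at ht
  obtain ⟨c, hc⟩ := ht
  obtain ⟨s, hs⟩ := Nat.exists_eq_add_of_lt hbM
  have h2M : (2 : ℝ) ^ b = 2 ^ M / (2 * 2 ^ s) := by
    rw [hs, eq_div_iff (by positivity)]; ring
  rw [h2M, inv_div, lt_div_iff₀ (by positivity)] at htb ⊢
  rw [add_mul, inv_mul_cancel₀ (by positivity)]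
  have hlo : ((c + c : ℤ) : ℝ) ≤ t * 2 ^ M := by
    rw [← hc, mul_comm]; exact Int.floor_le _
  have hhi : t * 2 ^ M < ((c + c : ℤ) : ℝ) + 1 := by
    rw [← hc, mul_comm]; exact Int.lt_floor_add_one _
  have hc_lt : c + c < 2 * 2 ^ s := by exact_mod_cast hlo.trans_lt htb
  have hc_le : ((c + c + 2 : ℤ) : ℝ) ≤ 2 * 2 ^ s := by
    exact_mod_cast (by omega : c + c + 2 ≤ 2 * 2 ^ s)
  push_cast at hhi hc_le
  linarith

def Yfactor (a : ℕ → ℕ) (k lo hi : ℕ) : Set ℝ :=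
  Icc 0 ((2 : ℝ) ^ (-(a k : ℤ))) ∩ {t | ∀ μ ∈ Finset.Icc lo hi, rademacher (a μ) t = 1}

lemma Yset_eq_pi (n k : ℕ) (m : ℕ → ℕ → ℕ) (J : ℕ → ℕ) :
    Yset n k m J = univ.pi fun i : Fin n => Yfactor (m i) k (J (i + 1)) (J i) := by
  ext x
  simp only [Yset, stdRect, Yfactor, rademacher, Set.mem_inter_iff, Set.mem_univ_pi,
    Set.mem_ofPred_eq, Finset.prod_boole, Finset.mem_univ, true_imp_iff, ite_eq_left_iff,
    zero_ne_one, imp_false, not_not, forall_and]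

lemma Yfactor_monotone (a : ℕ → ℕ) (k hi : ℕ) : Monotone fun lo => Yfactor a k lo hi :=
  fun _ _ h _ ht => ⟨ht.1, fun μ hμ => ht.2 μ (Finset.Icc_subset_Icc_left h hμ)⟩

lemma measurable_rademacher (q : ℕ) : Measurable (rademacher q) :=
  Measurable.ite (measurableSet_lt (by fun_prop) measurable_const) measurable_const
    measurable_const

lemma measurableSet_Yfactor (a : ℕ → ℕ) (k lo hi : ℕ) :
    MeasurableSet (Yfactor a k lo hi) := by
  refine measurableSet_Icc.inter ?_
  simp only [Set.ofPred_forall]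
  exact Finset.measurableSet_biInter _ fun μ _ =>
    measurable_rademacher _ (measurableSet_singleton 1)

lemma add_inv_two_pow_mem_Yfactor_diff {a : ℕ → ℕ} {k p hi : ℕ}
    (ha : StrictAntiOn a (Iic k)) (hak : 1 ≤ a k) (hp : p < hi) (hhi : hi ≤ k) {t : ℝ}
    (ht : t ∈ Yfactor a k p hi) (htk : t < (2 : ℝ) ^ (-(a k : ℤ))) :
    t + ((2 : ℝ) ^ a p)⁻¹ ∈ Yfactor a k (p + 1) hi \ Yfactor a k p hi := by
  have hp_mem : p ∈ Finset.Icc p hi := Finset.mem_Icc.2 ⟨le_rfl, hp.le⟩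
  have hM : rademacher (a p) t = 1 := ht.2 p hp_mem
  have hlt : ∀ μ, p < μ → μ ≤ k → a μ < a p := fun μ h₁ h₂ =>
    ha (Set.mem_Iic.2 (by omega)) (Set.mem_Iic.2 h₂) h₁
  have hone : ∀ μ ≤ k, 1 ≤ a μ := fun μ hμ =>
    hak.trans (ha.antitoneOn (Set.mem_Iic.2 hμ) (Set.mem_Iic.2 le_rfl) hμ)
  rw [zpow_neg, zpow_natCast] at htk
  have hδ : (0 : ℝ) < ((2 : ℝ) ^ a p)⁻¹ := by positivity
  refine ⟨⟨⟨by linarith [ht.1.1], ?_⟩, fun μ hμ => ?_⟩,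
    fun h => rademacher_add_inv_two_pow_self (hone p (by omega)) hM (h.2 p hp_mem)⟩
  · rw [zpow_neg, zpow_natCast]
    exact (add_inv_two_pow_lt (hlt k (by omega) le_rfl) htk hM).le
  · obtain ⟨hμ₁, hμ₂⟩ := Finset.mem_Icc.1 hμ
    exact (rademacher_add_inv_two_pow_iff (hone μ (by omega)) (hlt μ hμ₁ (by omega)) hM).2
      (ht.2 μ (Finset.mem_Icc.2 ⟨by omega, hμ₂⟩))

lemma update_mem_Eset_iff {n k r : ℕ} {m : ℕ → ℕ → ℕ} {j : ℕ → ℕ} {i : Fin n}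
    (hr : (i : ℕ) + 2 = r) (hj0 : j 0 = k) {x : Fin n → ℝ} (hx : x ∈ Eset n k r m j) (t : ℝ) :
    update x i t ∈ Eset n k r m j ↔ t ∈ Yfactor (m i) k (j (i + 1)) (j i) := by
  have hJ : ∀ J : ℕ → ℕ, J 0 = k → (∀ l, 1 ≤ l → l < r → J l = j l) →
      Yfactor (m i) k (J (i + 1)) (J i) = Yfactor (m i) k (j (i + 1)) (j i) := by
    intro J hJ0 hJj
    rw [hJj (i + 1) (by omega) (by omega)]
    rcases Nat.eq_zero_or_pos (i : ℕ) with hi | hi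
    · rw [hi, hJ0, hj0]
    · rw [hJj i hi (by omega)]
  obtain ⟨J, hJ_mem, hxJ⟩ := Set.mem_iUnion₂.1 hx
  rw [Yset_eq_pi] at hxJ
  constructor
  · intro h
    obtain ⟨J', ⟨hJ'0, -, -, hJ'j⟩, hJ'x⟩ := Set.mem_iUnion₂.1 h
    rw [Yset_eq_pi] at hJ'x
    simpa [hJ J' hJ'0 hJ'j] using hJ'x i (Set.mem_univ i)
  · intro ht
    refine Set.mem_iUnion₂.2 ⟨J, hJ_mem, ?_⟩
    rw [Yset_eq_pi, Set.update_mem_pi_iff_of_mem hxJ, hJ J hJ_mem.1 hJ_mem.2.2.2]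
    exact fun _ => ht

lemma measure_le_two_mul_of_subset_union_preimage_add {G : Type*} [MeasurableSpace G]
    [AddGroup G] [MeasurableAdd G] (μ : Measure G) [μ.IsAddLeftInvariant] {E S N : Set G}
    (v : G) (hN : μ N = 0) (hE : E ⊆ S ∪ (fun x => v + x) ⁻¹' S ∪ N) : μ E ≤ 2 * μ S :=
  calc μ E ≤ μ (S ∪ (fun x => v + x) ⁻¹' S) + μ N :=
        (measure_mono hE).trans (measure_union_le _ _)
    _ ≤ μ S + μ ((fun x => v + x) ⁻¹' S) := by rw [hN, add_zero]; exact measure_union_le _ _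
    _ = 2 * μ S := by rw [measure_preimage_add, two_mul]

lemma sum_measure_inter_le {α ι : Type*} [MeasurableSpace α] (μ : Measure α) (U : Set α)
    {D : ι → Set α} (hD : ∀ i, MeasurableSet (D i)) (hdisj : Pairwise (Disjoint on D))
    (s : Finset ι) : ∑ i ∈ s, μ (U ∩ D i) ≤ μ U := by
  have := sum_measure_le_measure_univ (μ := μ.restrict U) (s := s)
    (fun i _ => (hD i).nullMeasurableSet) fun i _ j _ hij => (hdisj hij).aedisjoint
  simpa [Measure.restrict_apply (hD _), Set.inter_comm] using this

lemma volume_Eset_le_two_mul_inter_slice {n k r : ℕ} {m : ℕ → ℕ → ℕ} {j : ℕ → ℕ}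
    {i : Fin n} (hmk : 1 ≤ m i k) (hm : StrictAntiOn (m i) (Iic k)) (hr : (i : ℕ) + 2 = r)
    (hj0 : j 0 = k) (hji : j (i + 1) ≤ j i) (hjk : j i ≤ k) :
    volume (Eset n k r m j) ≤ 2 * volume (Eset n k r m j ∩
      (fun x => x i) ⁻¹' disjointed (fun lo => Yfactor (m i) k lo (j i)) (j (i + 1))) := by
  set E := Eset n k r m j
  set A := fun lo => Yfactor (m i) k lo (j i)
  have hA : Monotone A := Yfactor_monotone _ _ _
  have hEA : ∀ x ∈ E, x i ∈ A (j (i + 1)) := fun x hx =>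
    (update_mem_Eset_iff hr hj0 hx (x i)).1 (by rwa [update_eq_self])
  cases hjp : j (i + 1) with
  | zero =>
    rw [hjp] at hEA
    have hsub : E ⊆ E ∩ (fun x => x i) ⁻¹' disjointed A 0 := fun x hx =>
      ⟨hx, by rw [Set.mem_preimage, disjointed_zero]; exact hEA x hx⟩
    exact (measure_mono hsub).trans (le_mul_of_one_le_left' one_le_two)
  | succ p =>
    rw [hjp] at hEA hji
    set δ : ℝ := ((2 : ℝ) ^ m i p)⁻¹
    refine measure_le_two_mul_of_subset_union_preimage_add volume (Pi.single i δ)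
      (N := {x | x i = (2 : ℝ) ^ (-(m i k : ℤ))})
      (by rw [volume_pi]; exact Measure.pi_hyperplane _ _ _) ?_
    intro x hx
    simp only [Set.mem_union, Set.mem_inter_iff, Set.mem_preimage, hA.disjointed_add_one]
    by_cases hxp : x i ∈ A p
    · rcases (hxp.1.2).eq_or_lt with hxk | hxk
      · exact Or.inr hxk
      · have hxδ := add_inv_two_pow_mem_Yfactor_diff hm hmk (by omega) hjk hxp hxk
        have hshift : Pi.single i δ + x = update x i (x i + δ) := by
          ext l; by_cases hl : l = i <;> simp [hl, add_comm]
        rw [hshift, update_self]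
        exact Or.inl (Or.inr ⟨(update_mem_Eset_iff hr hj0 hx _).2 (hjp ▸ hxδ.1), hxδ⟩)
    · exact Or.inl (Or.inl ⟨hx, hEA x hx, hxp⟩)

theorem measure_union_Eset_ge_half_sum_general (n : ℕ) (k : ℕ)
    (m : ℕ → ℕ → ℕ)
    (hpos : ∀ i < n, ∀ j ≤ k, 1 ≤ m i j)
    (hdec : ∀ i < n, ∀ j < k, m i (j + 1) < m i j)
    (r : ℕ) (hr2 : 2 ≤ r) (hrn : r ≤ n)
    (j : ℕ → ℕ) (hj0 : j 0 = k)
    (hjmono : ∀ a b : ℕ, a ≤ b → b ≤ r - 2 → j b ≤ j a) :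
    (1 / 2 : ℝ≥0∞) * ∑ jr ∈ Finset.range (j (r - 2) + 1),
        volume (Eset n k r m (fun l => if l = r - 1 then jr else j l)) ≤
      volume (⋃ jr ∈ Finset.range (j (r - 2) + 1),
        Eset n k r m (fun l => if l = r - 1 then jr else j l)) := by
  set i : Fin n := ⟨r - 2, by omega⟩
  have hi_ne : (i : ℕ) ≠ r - 1 := by simp only [i]; omega
  have hi_succ : (i : ℕ) + 1 = r - 1 := by simp only [i]; omega
  set s := Finset.range (j i + 1)
  set E := fun jr => Eset n k r m (fun l => if l = r - 1 then jr else j l)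
  set D := fun jr => (fun x : Fin n → ℝ => x i) ⁻¹'
    disjointed (fun lo => Yfactor (m i) k lo (j i)) jr
  have hslice : ∀ jr ∈ s, volume (E jr) ≤ 2 * volume (E jr ∩ D jr) := by
    intro jr hjr
    have hjr_le : jr ≤ j i := Nat.lt_succ_iff.1 (Finset.mem_range.1 hjr)
    have hji_le : j i ≤ k := hj0 ▸ hjmono 0 i (Nat.zero_le _) le_rfl
    simpa [hi_ne, hi_succ] using volume_Eset_le_two_mul_inter_slice (r := r) (i := i)
      (j := fun l => if l = r - 1 then jr else j l) (hpos i (by omega) k le_rfl)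
      (strictAntiOn_Iic_of_succ_lt (hdec i (by omega))) (by simp only [i]; omega)
      (by simp [show 0 ≠ r - 1 by omega, hj0]) (by simpa [hi_ne, hi_succ] using hjr_le)
      (by simpa [hi_ne] using hji_le)
  have hD_meas : ∀ jr, MeasurableSet (D jr) := fun jr => measurable_pi_apply i
    (MeasurableSet.disjointed (fun _ => measurableSet_Yfactor _ _ _ _) jr)
  have hD_disj : Pairwise (Disjoint on D) := fun _ _ h => (disjoint_disjointed _ h).preimage _
  calc (1 / 2 : ℝ≥0∞) * ∑ jr ∈ s, volume (E jr)
      ≤ (1 / 2 : ℝ≥0∞) * ∑ jr ∈ s, 2 * volume (E jr ∩ D jr) := by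
        gcongr with jr hjr; exact hslice jr hjr
    _ = ∑ jr ∈ s, volume (E jr ∩ D jr) := by
        rw [← Finset.mul_sum, ← mul_assoc, one_div,
          ENNReal.inv_mul_cancel two_ne_zero ENNReal.ofNat_ne_top, one_mul]
    _ ≤ ∑ jr ∈ s, volume ((⋃ jr ∈ s, E jr) ∩ D jr) := by
        gcongr with jr hjr
        exact Set.subset_biUnion_of_mem hjr
    _ ≤ volume (⋃ jr ∈ s, E jr) := sum_measure_inter_le _ _ hD_meas hD_disj s

/-- Claim `cl.E`. With `Y_J` and `E_{j₁,…,j_{r-1}}` built from the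
Rademacher-type functions and strictly decreasing positive integers `m i 0 > ⋯ > m i k`,
for every `2 ≤ r ≤ n` and every nonincreasing prefix `k = j₀ ≥ j₁ ≥ ⋯ ≥ j_{r-2} ≥ 0`,
`|⋃_{j=0}^{j_{r-2}} E_{j₁,…,j_{r-2},j}| ≥ (1/2) ∑_{j=0}^{j_{r-2}} |E_{j₁,…,j_{r-2},j}|`. -/
theorem measure_union_Eset_ge_half_sum (n : ℕ) (hn : 2 ≤ n) (k : ℕ)
    (m : ℕ → ℕ → ℕ)
    (hpos : ∀ i < n, ∀ j ≤ k, 1 ≤ m i j)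
    (hdec : ∀ i < n, ∀ j < k, m i (j + 1) < m i j)
    (r : ℕ) (hr2 : 2 ≤ r) (hrn : r ≤ n)
    (j : ℕ → ℕ) (hj0 : j 0 = k)
    (hjmono : ∀ a b : ℕ, a ≤ b → b ≤ r - 2 → j b ≤ j a) :
    (1 / 2 : ℝ≥0∞) * ∑ jr ∈ Finset.range (j (r - 2) + 1),
        volume (Eset n k r m (fun l => if l = r - 1 then jr else j l)) ≤
      volume (⋃ jr ∈ Finset.range (j (r - 2) + 1),
        Eset n k r m (fun l => if l = r - 1 then jr else j l)) :=
  measure_union_Eset_ge_half_sum_general n k m hpos hdec r hr2 hrn j hj0 hjmono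
end
end
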